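/- arXiv:1404.0153 — 5 statements merged into one kernel-verified Lean document; each statement's English description precedes it below -/
import Mathlib

section
/- Let C = (C(k))_{k≥0} be a double complex of real vector spaces. Suppose that for every q ∈ ℤ the sequence 0 → H_q(C(0)) → H_q(C(1)) → H_q(C(2)) → ⋯, with maps H_q(δ_k), is exact (that is, H_q(δ₁) is injective and ker H_q(δ_{k+1}) = im H_q(δ_k) for every k ≥ 1). Then the total complex C̃ is acyclic: H_n(C̃) = 0 for every n ∈ ℤ. -/
/-- A double complex of real vector spaces: chain complexes `C(k)` (`k ≥ 0`) with graded
pieces `X k p` (`p : ℤ`), differentials recorded as families `d k p q : X k p →ₗ X k q`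
vanishing unless `q = p - 1`, and anti-chain maps `δ k : C(k) → C(k+1)` of degree `0`,
recorded as families `δ k p r : X k p →ₗ X (k+1) r` vanishing unless `r = p`, with
`δ∘δ = 0`.  (So `δ (k-1)` here is the map written `δ_k : C(k-1) → C(k)` in the paper.) -/
structure DoubleComplex : Type 1 where
  X : ℕ → ℤ → Type
  [instAddCommGroup : ∀ k p, AddCommGroup (X k p)]
  [instModule : ∀ k p, Module ℝ (X k p)]
  d : ∀ (k : ℕ) (p q : ℤ), X k p →ₗ[ℝ] X k q
  d_support : ∀ (k : ℕ) (p q : ℤ) (x : X k p), q ≠ p - 1 → d k p q x = 0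
  d_sq : ∀ (k : ℕ) (p q r : ℤ) (x : X k p), d k q r (d k p q x) = 0
  δ : ∀ (k : ℕ) (p r : ℤ), X k p →ₗ[ℝ] X (k + 1) r
  δ_support : ∀ (k : ℕ) (p r : ℤ) (x : X k p), r ≠ p → δ k p r x = 0
  δ_anti : ∀ (k : ℕ) (p r : ℤ) (x : X k p),
    δ k (p - 1) (r - 1) (d k p (p - 1) x) = - d (k + 1) r (r - 1) (δ k p r x)
  δ_sq : ∀ (k : ℕ) (p r s : ℤ) (x : X k p), δ (k + 1) r s (δ k p r x) = 0

attribute [instance] DoubleComplex.instAddCommGroup DoubleComplex.instModule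

namespace DoubleComplex

/-- `x` is a cycle of `C(k)` in degree `q`. -/
def IsCycle (C : DoubleComplex) (k : ℕ) (q : ℤ) (x : C.X k q) : Prop :=
  C.d k q (q - 1) x = 0

/-- `x` is a boundary of `C(k)` in degree `q`. -/
def IsBoundary (C : DoubleComplex) (k : ℕ) (q : ℤ) (x : C.X k q) : Prop :=
  ∃ y : C.X k (q + 1), C.d k (q + 1) q y = x

/-- The total complex `C̃_n = ∏_{k ≥ 0} C(k)_{n+k}`. -/
def Tot (C : DoubleComplex) (n : ℤ) : Type := ∀ k : ℕ, C.X k (n + (k : ℤ))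

instance (C : DoubleComplex) (n : ℤ) : AddCommGroup (C.Tot n) :=
  inferInstanceAs (AddCommGroup (∀ k : ℕ, C.X k (n + (k : ℤ))))

instance (C : DoubleComplex) (n : ℤ) : Module ℝ (C.Tot n) :=
  inferInstanceAs (Module ℝ (∀ k : ℕ, C.X k (n + (k : ℤ))))

/-- The total differential `(∂̃ x)_k = ∂ x_k + δ_k (x_{k-1})`. -/
def totD (C : DoubleComplex) (n m : ℤ) (x : C.Tot n) : C.Tot m := fun k =>
  C.d k (n + (k : ℤ)) (m + (k : ℤ)) (x k) +
    (match k with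
      | 0 => 0
      | (j + 1) => C.δ j (n + (j : ℤ)) (m + ((j + 1 : ℕ) : ℤ)) (x j))

end DoubleComplex


/-!
Solve `∂̃ y = x` column by column: `y₀` with `∂ y₀ = x₀`, then `y_{k+1}` with
`∂ y_{k+1} = x_{k+1} - δ y_k`. The defect `x_{k+1} - δ y_k` is always a cycle, but to continue
it must be a boundary. Each `y_k` may be changed by a cycle `w` of `C(k)`, and exactness at
`C(k+1)` says exactly that `w` can be chosen to make the next defect a boundary; injectivity of
`H(δ₁)` makes `x₀` itself a boundary, which starts the induction. Since `C̃` is a product, the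
infinite sequence of choices is a chain of `C̃`.
-/

theorem exists_seq_of_forall_exists {β : ℕ → Type*} (P : ∀ k, β k → Prop)
    (R : ∀ k, β k → β (k + 1) → Prop) {b₀ : β 0} (h₀ : P 0 b₀)
    (hstep : ∀ k b, P k b → ∃ b', R k b b' ∧ P (k + 1) b') :
    ∃ f : ∀ k, β k, f 0 = b₀ ∧ ∀ k, R k (f k) (f (k + 1)) := by
  choose g hgR hgP using hstep
  let F : ∀ k, {b : β k // P k b} := fun k =>
    Nat.rec ⟨b₀, h₀⟩ (fun k b => ⟨g k b.1 b.2, hgP k b.1 b.2⟩) k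
  exact ⟨fun k => (F k).1, rfl, fun k => hgR k (F k).1 (F k).2⟩

namespace DoubleComplex

variable (C : DoubleComplex) {k : ℕ}

theorem isCycle_iff_of_eq {q r : ℤ} (h : r = q - 1) {x : C.X k q} :
    C.IsCycle k q x ↔ C.d k q r x = 0 := by
  subst h; rfl

theorem δ_d_of_eq {p q : ℤ} (h : q = p - 1) (x : C.X k p) :
    C.δ k q q (C.d k p q x) = -C.d (k + 1) p q (C.δ k p p x) := by
  subst h; exact C.δ_anti k p p x

theorem isBoundary_δ_of_d_add_δ_eq_zero {p q s : ℤ} (hp : p = q + 1) (hs : s = q)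
    {a : C.X (k + 1) p} {r : C.X k q} (h : C.d (k + 1) p s a + C.δ k q s r = 0) :
    C.IsBoundary (k + 1) q (C.δ k q q r) := by
  subst p s
  exact ⟨-a, by rw [map_neg, neg_eq_iff_add_eq_zero]; exact h⟩

/-- The induction step: `r` is the current defect in `C(c)`, and `a`, `b` are the next two
components of a total cycle whose `C(c)`-component has been replaced by `r`. The degrees are
independent variables tied by equations because the degrees `n + ↑k` of the components of `Tot`
are only propositionally equal to shapes such as `q + 1`. -/
theorem exists_d_eq_and_isBoundary_sub_δ {c : ℕ} {q p e s p₂ t : ℤ}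
    (hexact : ∀ z : C.X (c + 1) p, C.IsCycle (c + 1) p z →
      C.IsBoundary (c + 2) p (C.δ (c + 1) p p z) →
        ∃ w : C.X c p, C.IsCycle c p w ∧ C.IsBoundary (c + 1) p (z - C.δ c p p w))
    (hp : p = q + 1) (he : e = q + 1) (hs : s = q) (hp₂ : p₂ = p + 1) (ht : t = p)
    {r : C.X c q} {a : C.X (c + 1) p} {b : C.X (c + 2) p₂} (hr : C.IsBoundary c q r)
    (ha : C.d (c + 1) p s a + C.δ c q s r = 0)
    (hb : C.d (c + 2) p₂ t b + C.δ (c + 1) p t a = 0) :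
    ∃ y : C.X c e, C.d c e q y = r ∧ C.IsBoundary (c + 1) p (a - C.δ c e p y) := by
  subst s t p₂ p e
  obtain ⟨u, hu⟩ := hr
  have hz : C.IsCycle (c + 1) (q + 1) (a - C.δ c (q + 1) (q + 1) u) := by
    have hδu := C.δ_d_of_eq (q := q) (by omega) u
    rw [hu] at hδu
    rw [C.isCycle_iff_of_eq (r := q) (by omega), map_sub]
    linear_combination (norm := module) ha - hδu
  have hδz : C.IsBoundary (c + 2) (q + 1) (C.δ (c + 1) (q + 1) (q + 1)
      (a - C.δ c (q + 1) (q + 1) u)) := by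
    rw [map_sub, C.δ_sq, sub_zero]
    exact C.isBoundary_δ_of_d_add_δ_eq_zero rfl rfl hb
  obtain ⟨w, hw, hbd⟩ := hexact _ hz hδz
  refine ⟨u + w, ?_, ?_⟩
  · rw [map_add, hu, (C.isCycle_iff_of_eq (r := q) (by omega)).mp hw, add_zero]
  · rwa [map_add, ← sub_sub]

end DoubleComplex

/-- Lemma 6.1.  If for every degree `q` the sequence
`0 → H_q(C(0)) → H_q(C(1)) → ⋯` induced by the maps `δ` is exact — i.e.
`H_q(δ₁)` is injective and `ker H_q(δ_{k+1}) = im H_q(δ_k)` for every `k ≥ 1` —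
then the total complex `C̃` is acyclic: every cycle of `C̃` is a boundary. -/
theorem DoubleComplex.total_acyclic_of_exact (C : DoubleComplex)
    (hinj : ∀ (q : ℤ) (x : C.X 0 q), C.IsCycle 0 q x →
      C.IsBoundary 1 q (C.δ 0 q q x) → C.IsBoundary 0 q x)
    (hexact : ∀ (j : ℕ) (q : ℤ) (x : C.X (j + 1) q), C.IsCycle (j + 1) q x →
      (C.IsBoundary (j + 2) q (C.δ (j + 1) q q x) ↔
        ∃ y : C.X j q, C.IsCycle j q y ∧ C.IsBoundary (j + 1) q (x - C.δ j q q y))) :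
    ∀ (n : ℤ) (x : C.Tot n), C.totD n (n - 1) x = 0 →
      ∃ y : C.Tot (n + 1), C.totD (n + 1) n y = x := by
  intro n x hx
  have hcycle₀ : C.d 0 (n + (0 : ℕ)) (n - 1 + (0 : ℕ)) (x 0) = 0 :=
    (add_zero _).symm.trans (congrFun hx 0)
  have hcycle : ∀ k : ℕ, C.d (k + 1) (n + ↑(k + 1)) (n - 1 + ↑(k + 1)) (x (k + 1)) +
      C.δ k (n + k) (n - 1 + ↑(k + 1)) (x k) = 0 := fun k => congrFun hx (k + 1)
  have hbd₀ : C.IsBoundary 0 (n + (0 : ℕ)) (x 0) :=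
    hinj _ _ ((C.isCycle_iff_of_eq (by omega)).mpr hcycle₀)
      (C.isBoundary_δ_of_d_add_δ_eq_zero (by omega) (by omega) (hcycle 0))
  obtain ⟨y₀, hy₀, hP₀⟩ := C.exists_d_eq_and_isBoundary_sub_δ (e := n + 1 + (0 : ℕ))
    (fun z hz => (hexact 0 _ z hz).mp)
    (by omega) (by omega) (by omega) (by omega) (by omega) hbd₀ (hcycle 0) (hcycle 1)
  obtain ⟨y, rfl, hy⟩ := exists_seq_of_forall_exists
    (fun k (yk : C.X k (n + 1 + k)) =>
      C.IsBoundary (k + 1) (n + ↑(k + 1)) (x (k + 1) - C.δ k _ (n + ↑(k + 1)) yk))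
    (fun k yk yk' => C.d (k + 1) _ (n + ↑(k + 1)) yk' = x (k + 1) - C.δ k _ (n + ↑(k + 1)) yk)
    hP₀
    (fun k yk hk => C.exists_d_eq_and_isBoundary_sub_δ
      (e := n + 1 + ↑(k + 1)) (s := n - 1 + ↑(k + 2))
      (fun z hz => (hexact (k + 1) _ z hz).mp)
      (by omega) (by omega) (by omega) (by omega) (by omega) hk
      (by rw [map_sub, C.δ_sq, sub_zero]; exact hcycle (k + 1)) (hcycle (k + 2)))
  refine ⟨y, funext fun k => ?_⟩
  cases k with
  | zero => exact (add_zero _).trans hy₀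
  | succ k => exact eq_sub_iff_add_eq.mp (hy k)
end

section
/- Let φ : C → D be a morphism of double complexes of real vector spaces. If φ(k) : C(k)_* → D(k)_* is a quasi-isomorphism for every k ≥ 0, then the induced chain map on total complexes φ̃ : C̃ → D̃, (x_k)_{k≥0} ↦ (φ(k)(x_k))_{k≥0}, is a quasi-isomorphism. -/
/-- The chain map `C̃ → D̃` on total complexes induced by a morphism of double
complexes, `(x_k)_k ↦ (f k (x_k))_k`. -/
def DoubleComplex.totMap (C D : DoubleComplex)
    (f : ∀ (k : ℕ) (p : ℤ), C.X k p →ₗ[ℝ] D.X k p) (n : ℤ) (x : C.Tot n) : D.Tot n :=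
  fun k => f k (n + (k : ℤ)) (x k)


/-! The chain-level form of "`φ̃` is a quasi-isomorphism" says that every cycle `(x, t)` of
the mapping cone of `φ̃` (`∂̃x = 0`, `∂̃t = φ̃x`) is a boundary `(y, v)` (`∂̃y = x`,
`∂̃v = t - φ̃y`): injectivity on homology is the general case, surjectivity the case `x = 0`.
Since each `φ(k)` is a quasi-isomorphism, the cone of `φ(k)` is exact. A cone cycle of the
total complexes is then killed column by column: once `(y_j, v_j)` is found for `j < k`, the
defect `(x_k - δy_{k-1}, t_k - δv_{k-1})` is a cone cycle in column `k` (this uses `δ² = 0`,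
`∂δ = -δ∂` and `φδ = δφ`), and any preimage of it is `(y_k, v_k)`. As `C̃` is a product over
the columns, the infinitely many choices assemble into elements of `C̃` and `D̃`. -/

theorem exists_seq_of_step {S : ℕ → Type*} (P : ∀ k, S k → Prop)
    (R : ∀ k, S k → S (k + 1) → Prop) {s₀ : S 0} (h₀ : P 0 s₀)
    (step : ∀ k s, P k s → ∃ s', P (k + 1) s' ∧ R k s s') :
    ∃ g : ∀ k, S k, g 0 = s₀ ∧ ∀ k, R k (g k) (g (k + 1)) := by
  let G : ∀ k, {s : S k // P k s} := fun k =>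
    Nat.rec ⟨s₀, h₀⟩ (fun k s => ⟨_, (step k s.1 s.2).choose_spec.1⟩) k
  exact ⟨fun k => (G k).1, rfl, fun k => (step k _ (G k).2).choose_spec.2⟩

namespace DoubleComplex

variable {C D : DoubleComplex}

theorem totD_apply_zero (n m : ℤ) (x : C.Tot n) :
    C.totD n m x 0 = C.d 0 (n + (0 : ℕ)) (m + (0 : ℕ)) (x 0) :=
  add_zero _

theorem totD_apply_succ (n m : ℤ) (x : C.Tot n) (k : ℕ) :
    C.totD n m x (k + 1) = C.d (k + 1) (n + (k + 1 : ℕ)) (m + (k + 1 : ℕ)) (x (k + 1)) +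
      C.δ k (n + k) (m + (k + 1 : ℕ)) (x k) :=
  rfl

@[simp]
theorem Tot.zero_apply (n : ℤ) (k : ℕ) : (0 : C.Tot n) k = 0 :=
  rfl

theorem Tot.sub_apply {n : ℤ} (a b : C.Tot n) (k : ℕ) : (a - b) k = a k - b k :=
  rfl

theorem totD_zero (n m : ℤ) : C.totD n m 0 = 0 := by
  funext k
  cases k <;> simp [totD_apply_zero, totD_apply_succ]

theorem totMap_zero (f : ∀ (k : ℕ) (p : ℤ), C.X k p →ₗ[ℝ] D.X k p) (n : ℤ) :
    totMap C D f n 0 = 0 := by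
  funext k
  simp [totMap]

theorem d_δ (k : ℕ) {p q r s : ℤ} (hq : q = p - 1) (hs : s = r - 1) (x : C.X k p) :
    C.d (k + 1) r s (C.δ k p r x) = -C.δ k q s (C.d k p q x) := by
  subst hq hs
  rw [C.δ_anti, neg_neg]

theorem δ_add_δ (k : ℕ) {p r s : ℤ} (a : C.X (k + 1) p) (b : C.X k r) :
    C.δ (k + 1) p s (a + C.δ k r p b) = C.δ (k + 1) p s a := by
  rw [map_add, C.δ_sq, add_zero]

/-- Every cycle `(u, t)` of the mapping cone of `f k` (`∂u = 0`, `∂t = f u`) is the boundary of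
some `(y, v)`. The degrees are free, tied only by equations, so that the property applies to the
degrees `n + k` of total complexes. -/
def ConeExact (C D : DoubleComplex) (f : ∀ (k : ℕ) (p : ℤ), C.X k p →ₗ[ℝ] D.X k p) (k : ℕ) :
    Prop :=
  ∀ ⦃q₀ q q' q'' : ℤ⦄, q = q₀ + 1 → q' = q + 1 → q'' = q' + 1 →
    ∀ (u : C.X k q) (t : D.X k q'), C.d k q q₀ u = 0 → D.d k q' q t = f k q u →
      ∃ (y : C.X k q') (v : D.X k q''), C.d k q' q y = u ∧ D.d k q'' q' v = t - f k q' y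

theorem coneExact_of_quasiIso {f : ∀ (k : ℕ) (p : ℤ), C.X k p →ₗ[ℝ] D.X k p} (k : ℕ)
    (hf_chain : ∀ (p q : ℤ) (x : C.X k p), f k q (C.d k p q x) = D.d k p q (f k p x))
    (hqis_inj : ∀ (q : ℤ) (x : C.X k q), C.IsCycle k q x →
      D.IsBoundary k q (f k q x) → C.IsBoundary k q x)
    (hqis_surj : ∀ (q : ℤ) (y : D.X k q), D.IsCycle k q y →
      ∃ x : C.X k q, C.IsCycle k q x ∧ D.IsBoundary k q (y - f k q x)) :
    ConeExact C D f k := by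
  rintro q₀ _ _ _ rfl rfl rfl u t hu ht
  have hu_cycle : C.IsCycle k (q₀ + 1) u := by rwa [IsCycle, add_sub_cancel_right]
  obtain ⟨a, rfl⟩ := hqis_inj _ u hu_cycle ⟨t, ht⟩
  have hdefect_cycle : D.IsCycle k (q₀ + 1 + 1) (t - f k _ a) := by
    rw [IsCycle, add_sub_cancel_right, map_sub, ht, hf_chain, sub_self]
  obtain ⟨c, hc, v, hv⟩ := hqis_surj _ _ hdefect_cycle
  rw [IsCycle, add_sub_cancel_right] at hc
  refine ⟨a + c, v, by rw [map_add, hc, add_zero], ?_⟩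
  rw [hv, map_add]
  abel

section TotalCone

variable {f : ∀ (k : ℕ) (p : ℤ), C.X k p →ₗ[ℝ] D.X k p} {n₀ n₁ n₂ : ℤ} {x : C.Tot n₀}
  {t : D.Tot n₁}

theorem totMap_apply (n : ℤ) (x : C.Tot n) (k : ℕ) : totMap C D f n x k = f k (n + k) (x k) :=
  rfl

/-- `hy` and `hv` are the equations of column `k` with `δ` applied, which kills the contribution
of column `k - 1`; this is all that the next column needs. -/
theorem exists_next_column_preimage {k : ℕ} (hcone : ConeExact C D f (k + 1))
    (hf_δ : ∀ (p r : ℤ) (x : C.X k p), f (k + 1) r (C.δ k p r x) = D.δ k p r (f k p x))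
    (h₁ : n₁ = n₀ + 1) (h₂ : n₂ = n₁ + 1) (hx : C.totD n₀ (n₀ - 1) x = 0)
    (ht : D.totD n₁ n₀ t = totMap C D f n₀ x) (y : C.X k (n₁ + k)) (v : D.X k (n₂ + k))
    (hy : C.δ k (n₀ + k) (n₀ - 1 + (k + 1 : ℕ)) (C.d k (n₁ + k) (n₀ + k) y) =
      C.δ k (n₀ + k) (n₀ - 1 + (k + 1 : ℕ)) (x k))
    (hv : D.δ k (n₁ + k) (n₀ + (k + 1 : ℕ)) (D.d k (n₂ + k) (n₁ + k) v) =
      D.δ k (n₁ + k) (n₀ + (k + 1 : ℕ)) (t k - f k (n₁ + k) y)) :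
    ∃ (y' : C.X (k + 1) (n₁ + (k + 1 : ℕ))) (v' : D.X (k + 1) (n₂ + (k + 1 : ℕ))),
      C.d (k + 1) (n₁ + (k + 1 : ℕ)) (n₀ + (k + 1 : ℕ)) y' +
          C.δ k (n₁ + k) (n₀ + (k + 1 : ℕ)) y = x (k + 1) ∧
        D.d (k + 1) (n₂ + (k + 1 : ℕ)) (n₁ + (k + 1 : ℕ)) v' +
          D.δ k (n₂ + k) (n₁ + (k + 1 : ℕ)) v = t (k + 1) - f (k + 1) (n₁ + (k + 1 : ℕ)) y' := by
  have hx' := congrFun hx (k + 1)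
  have ht' := congrFun ht (k + 1)
  rw [totD_apply_succ, Tot.zero_apply, ← eq_neg_iff_add_eq_zero] at hx'
  rw [totD_apply_succ, totMap_apply, ← eq_sub_iff_add_eq] at ht'
  set u := x (k + 1) - C.δ k (n₁ + k) (n₀ + (k + 1 : ℕ)) y
  have hu : C.d (k + 1) (n₀ + (k + 1 : ℕ)) (n₀ - 1 + (k + 1 : ℕ)) u = 0 := by
    rw [map_sub, C.d_δ k (q := n₀ + k) (by omega) (by omega), hy, hx', sub_neg_eq_add,
      neg_add_cancel]
  have hs : D.d (k + 1) (n₁ + (k + 1 : ℕ)) (n₀ + (k + 1 : ℕ))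
      (t (k + 1) - D.δ k (n₂ + k) (n₁ + (k + 1 : ℕ)) v) = f (k + 1) _ u := by
    rw [map_sub, D.d_δ k (q := n₁ + k) (by omega) (by omega), hv, ht']
    simp only [u, map_sub, hf_δ]
    abel
  obtain ⟨y', v', hy', hv'⟩ :=
    hcone (q'' := n₂ + (k + 1 : ℕ)) (by omega) (by omega) (by omega) u _ hu hs
  exact ⟨y', v', by rw [hy', sub_add_cancel], by rw [hv']; abel⟩

theorem exists_totD_preimage_of_coneExact (hcone : ∀ k, ConeExact C D f k)
    (hf_δ : ∀ (k : ℕ) (p r : ℤ) (x : C.X k p),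
      f (k + 1) r (C.δ k p r x) = D.δ k p r (f k p x))
    (h₁ : n₁ = n₀ + 1) (h₂ : n₂ = n₁ + 1) (hx : C.totD n₀ (n₀ - 1) x = 0)
    (ht : D.totD n₁ n₀ t = totMap C D f n₀ x) :
    ∃ (y : C.Tot n₁) (v : D.Tot n₂),
      C.totD n₁ n₀ y = x ∧ D.totD n₂ n₁ v = t - totMap C D f n₁ y := by
  have hx₀ := congrFun hx 0
  have ht₀ := congrFun ht 0
  rw [totD_apply_zero, Tot.zero_apply] at hx₀
  rw [totD_apply_zero, totMap_apply] at ht₀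
  obtain ⟨y₀, v₀, hy₀, hv₀⟩ :=
    hcone 0 (q'' := n₂ + (0 : ℕ)) (by omega) (by omega) (by omega) (x 0) (t 0) hx₀ ht₀
  obtain ⟨g, hg₀, hg⟩ := exists_seq_of_step (S := fun k => C.X k (n₁ + k) × D.X k (n₂ + k))
    (fun k s =>
      C.δ k (n₀ + k) (n₀ - 1 + (k + 1 : ℕ)) (C.d k (n₁ + k) (n₀ + k) s.1) =
          C.δ k (n₀ + k) (n₀ - 1 + (k + 1 : ℕ)) (x k) ∧
        D.δ k (n₁ + k) (n₀ + (k + 1 : ℕ)) (D.d k (n₂ + k) (n₁ + k) s.2) =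
          D.δ k (n₁ + k) (n₀ + (k + 1 : ℕ)) (t k - f k (n₁ + k) s.1))
    (fun k s s' =>
      C.d (k + 1) (n₁ + (k + 1 : ℕ)) (n₀ + (k + 1 : ℕ)) s'.1 +
          C.δ k (n₁ + k) (n₀ + (k + 1 : ℕ)) s.1 = x (k + 1) ∧
        D.d (k + 1) (n₂ + (k + 1 : ℕ)) (n₁ + (k + 1 : ℕ)) s'.2 +
          D.δ k (n₂ + k) (n₁ + (k + 1 : ℕ)) s.2 = t (k + 1) - f (k + 1) (n₁ + (k + 1 : ℕ)) s'.1)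
    (s₀ := (y₀, v₀)) ⟨by rw [hy₀], by rw [hv₀]⟩
    (fun k s hs => by
      obtain ⟨y', v', hy', hv'⟩ :=
        exists_next_column_preimage (hcone (k + 1)) (hf_δ k) h₁ h₂ hx ht s.1 s.2 hs.1 hs.2
      exact ⟨(y', v'), ⟨by rw [← hy', δ_add_δ], by rw [← hv', δ_add_δ]⟩, hy', hv'⟩)
  let y : C.Tot n₁ := fun k => (g k).1
  let v : D.Tot n₂ := fun k => (g k).2
  have hy_zero : y 0 = y₀ := by simp [y, hg₀]
  have hv_zero : v 0 = v₀ := by simp [v, hg₀]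
  refine ⟨y, v, funext fun k => ?_, funext fun k => ?_⟩
  · cases k with
    | zero => rw [totD_apply_zero, hy_zero, hy₀]
    | succ k => exact (hg k).1
  · cases k with
    | zero => rw [totD_apply_zero, Tot.sub_apply, totMap_apply, hv_zero, hy_zero, hv₀]
    | succ k => exact (hg k).2

end TotalCone

end DoubleComplex

/-- Lemma 6.2.  If a morphism `φ : C → D` of double complexes is a
quasi-isomorphism in every column (`φ(k) : C(k) → D(k)` induces isomorphisms on
homology in every degree), then the induced chain map `φ̃ : C̃ → D̃` of total
complexes is a quasi-isomorphism (injective and surjective on homology in every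
degree). -/
theorem DoubleComplex.totMap_quasiIso (C D : DoubleComplex)
    (f : ∀ (k : ℕ) (p : ℤ), C.X k p →ₗ[ℝ] D.X k p)
    (hf_chain : ∀ (k : ℕ) (p q : ℤ) (x : C.X k p),
      f k q (C.d k p q x) = D.d k p q (f k p x))
    (hf_δ : ∀ (k : ℕ) (p r : ℤ) (x : C.X k p),
      f (k + 1) r (C.δ k p r x) = D.δ k p r (f k p x))
    (hqis_inj : ∀ (k : ℕ) (q : ℤ) (x : C.X k q), C.IsCycle k q x →
      D.IsBoundary k q (f k q x) → C.IsBoundary k q x)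
    (hqis_surj : ∀ (k : ℕ) (q : ℤ) (y : D.X k q), D.IsCycle k q y →
      ∃ x : C.X k q, C.IsCycle k q x ∧ D.IsBoundary k q (y - f k q x)) :
    ∀ n : ℤ,
      (∀ x : C.Tot n, C.totD n (n - 1) x = 0 →
        (∃ w : D.Tot (n + 1), D.totD (n + 1) n w = DoubleComplex.totMap C D f n x) →
        ∃ y : C.Tot (n + 1), C.totD (n + 1) n y = x) ∧
      (∀ z : D.Tot n, D.totD n (n - 1) z = 0 →
        ∃ x : C.Tot n, C.totD n (n - 1) x = 0 ∧
          ∃ w : D.Tot (n + 1),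
            D.totD (n + 1) n w = z - DoubleComplex.totMap C D f n x) := by
  have hcone (k : ℕ) : C.ConeExact D f k :=
    coneExact_of_quasiIso k (hf_chain k) (hqis_inj k) (hqis_surj k)
  intro n
  constructor
  · rintro x hx ⟨w, hw⟩
    obtain ⟨y, -, hy, -⟩ := exists_totD_preimage_of_coneExact hcone hf_δ rfl rfl hx hw
    exact ⟨y, hy⟩
  · intro z hz
    obtain ⟨x, w, hx, hw⟩ := exists_totD_preimage_of_coneExact (x := 0) hcone hf_δ
      (sub_add_cancel n 1).symm rfl (totD_zero _ _) (by rwa [totMap_zero])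
    exact ⟨x, hx, w, hw⟩
end

section
/- Let U be a finite-dimensional smooth manifold without boundary, let T : U → ℝ be a C∞ function with T(u) ≥ 0 for all u, and set Ũ := {(u, t) ∈ U × ℝ : 0 ≤ t ≤ T(u)}. Let V be an open neighborhood of Ũ in U × ℝ and F : V → ℝ a C∞ function such that for every u ∈ U and every integer m ≥ 0, the m-th derivative of the function t ↦ F(u, t) vanishes at t = 0 and at t = T(u). Then the function f̃ : U × ℝ → ℝ defined by f̃(u, t) = F(u, t) if 0 ≤ t ≤ T(u) and f̃(u, t) = 0 otherwise, is of class C∞ on U × ℝ. -/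
/-! In a chart the function becomes `G` cut off to the region `0 ≤ t ≤ τ y`, with `G` smooth
near that region and flat (all `t`-derivatives vanish) along the graphs `t = 0` and `t = τ y`.
Along such a graph the full derivative `DG` vanishes: in the `t`-direction by flatness, along the
graph because `G` is zero there. By symmetry of second derivatives, `DG` is again flat along the
graph. Hence the cut-off of `G` is differentiable with derivative the cut-off of `DG`, and
induction on the order gives smoothness. -/

open scoped Manifold ContDiff Topology
open Set Filter

section Flat

variable {E F : Type*} [NormedAddCommGroup F] [NormedSpace ℝ F]

def FlatAlong (G : E × ℝ → F) (c : E → ℝ) (O : Set E) : Prop :=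
  ∀ y ∈ O, ∀ k : ℕ, iteratedDeriv k (fun t => G (y, t)) (c y) = 0

variable {G : E × ℝ → F} {O : Set E} {c : E → ℝ}

lemma FlatAlong.continuousLinearEquiv_comp {F' : Type*} [NormedAddCommGroup F']
    [NormedSpace ℝ F'] (h : FlatAlong G c O) (L : F ≃L[ℝ] F') :
    FlatAlong (fun p => L (G p)) c O := by
  intro y hy k
  have hL := L.iteratedFDeriv_comp_left (f := fun t => G (y, t)) (x := c y) (i := k)
  simp only [iteratedDeriv_eq_iteratedFDeriv, Function.comp_def] at hL ⊢
  rw [hL]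
  simpa [iteratedDeriv_eq_iteratedFDeriv] using congr(L $(h y hy k))

variable [NormedAddCommGroup E] [NormedSpace ℝ E] {V : Set (E × ℝ)}

lemma DifferentiableAt.hasDerivAt_slice {x : E} {t : ℝ} (hG : DifferentiableAt ℝ G (x, t)) :
    HasDerivAt (fun s => G (x, s)) (fderiv ℝ G (x, t) (0, 1)) t := by
  simpa [Function.comp_def] using
    hG.hasFDerivAt.comp_hasDerivAt t ((hasDerivAt_const t x).prodMk (hasDerivAt_id t))

lemma FlatAlong.fderiv_apply_vertical (hV : IsOpen V) (hG : DifferentiableOn ℝ G V)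
    (hcV : ∀ y ∈ O, (y, c y) ∈ V) (h : FlatAlong G c O) :
    FlatAlong (fun q => fderiv ℝ G q (0, 1)) c O := by
  intro y hy k
  have hslice : (fun t => fderiv ℝ G (y, t) (0, 1)) =ᶠ[𝓝 (c y)] deriv (fun t => G (y, t)) := by
    filter_upwards [(continuousAt_const.prodMk continuousAt_id).preimage_mem_nhds
      (hV.mem_nhds (hcV y hy))] with t ht
    exact (hG.differentiableAt (hV.mem_nhds ht)).hasDerivAt_slice.deriv.symm
  rw [hslice.iteratedDeriv_eq, ← iteratedDeriv_succ']
  exact h y hy (k + 1)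

lemma FlatAlong.fderiv_eq_zero (hO : IsOpen O) (hc : DifferentiableOn ℝ c O)
    (h : FlatAlong G c O) {x : E} (hx : x ∈ O) (hG : DifferentiableAt ℝ G (x, c x)) :
    fderiv ℝ G (x, c x) = 0 := by
  have hvertical : fderiv ℝ G (x, c x) (0, 1) = 0 := by
    rw [← hG.hasDerivAt_slice.deriv, ← iteratedDeriv_one]
    exact h x hx 1
  have hgraph : ∀ v, fderiv ℝ G (x, c x) (v, fderiv ℝ c x v) = 0 := by
    have hzero : (fun y => G (y, c y)) =ᶠ[𝓝 x] fun _ => 0 := by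
      filter_upwards [hO.mem_nhds hx] with y hy
      simpa using h y hy 0
    have hcomp := hG.hasFDerivAt.comp x
      ((hasFDerivAt_id x).prodMk (hc.differentiableAt (hO.mem_nhds hx)).hasFDerivAt)
    intro v
    simpa using congr($(hcomp.unique ((hasFDerivAt_const 0 x).congr_of_eventuallyEq hzero)) v)
  refine ContinuousLinearMap.ext fun w => ?_
  have hw : w = (w.1, fderiv ℝ c x w.1) + (w.2 - fderiv ℝ c x w.1) • ((0 : E), (1 : ℝ)) := by
    ext <;> simp
  rw [hw, map_add, map_smul, hgraph, hvertical, smul_zero, add_zero, zero_apply]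

lemma ContDiffAt.deriv_fderiv_slice {x : E} {t : ℝ} (hG : ContDiffAt ℝ 2 G (x, t)) :
    deriv (fun s => fderiv ℝ G (x, s)) t = fderiv ℝ (fun q => fderiv ℝ G q (0, 1)) (x, t) := by
  have hd : DifferentiableAt ℝ (fderiv ℝ G) (x, t) :=
    (hG.fderiv_right (m := 1) (by norm_num)).differentiableAt one_ne_zero
  have hsymm := hG.isSymmSndFDerivAt (by simp [minSmoothness_of_isRCLikeNormedField])
  refine ContinuousLinearMap.ext fun w => ?_
  rw [hd.hasDerivAt_slice.deriv, fderiv_clm_apply hd (differentiableAt_const _)]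
  simp [hsymm.eq]

lemma FlatAlong.fderiv (hO : IsOpen O) (hc : DifferentiableOn ℝ c O) (hV : IsOpen V)
    (hcV : ∀ y ∈ O, (y, c y) ∈ V) (hG : ContDiffOn ℝ ∞ G V) (h : FlatAlong G c O) :
    FlatAlong (fderiv ℝ G) c O := by
  intro y hy k
  induction k generalizing G with
  | zero =>
    simpa using h.fderiv_eq_zero hO hc hy
      ((hG.differentiableOn (by simp)).differentiableAt (hV.mem_nhds (hcV y hy)))
  | succ k ih =>
    have hvertical : ContDiffOn ℝ ∞ (fun q => fderiv ℝ G q (0, 1)) V :=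
      (hG.fderiv_of_isOpen hV le_rfl).clm_apply contDiffOn_const
    have hslice : deriv (fun t => fderiv ℝ G (y, t)) =ᶠ[𝓝 (c y)]
        fun t => fderiv ℝ (fun q => fderiv ℝ G q (0, 1)) (y, t) := by
      filter_upwards [(continuousAt_const.prodMk continuousAt_id).preimage_mem_nhds
        (hV.mem_nhds (hcV y hy))] with t ht
      exact ((hG.contDiffAt (hV.mem_nhds ht)).of_le
        (WithTop.coe_le_coe.2 le_top)).deriv_fderiv_slice
    rw [iteratedDeriv_succ', hslice.iteratedDeriv_eq]
    exact ih hvertical (h.fderiv_apply_vertical hV (hG.differentiableOn (by simp)) hcV)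

end Flat

lemma HasFDerivAt.indicator_of_eq_zero {𝕜 X Y : Type*} [NontriviallyNormedField 𝕜]
    [NormedAddCommGroup X] [NormedSpace 𝕜 X] [NormedAddCommGroup Y] [NormedSpace 𝕜 Y]
    {f : X → Y} {x : X} (s : Set X) (hf : HasFDerivAt f (0 : X →L[𝕜] Y) x) (hx : f x = 0) :
    HasFDerivAt (s.indicator f) (0 : X →L[𝕜] Y) x := by
  refine .of_isLittleO <| (Asymptotics.isBigO_of_le _ fun x' => ?_).trans_isLittleO hf.isLittleO
  simpa [hx, indicator_apply_eq_zero.2 fun _ => hx] using norm_indicator_le_norm_self f x'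

section Cutoff

variable {E F : Type*} [NormedAddCommGroup E] [NormedSpace ℝ E]
  [NormedAddCommGroup F] [NormedSpace ℝ F] {O : Set E} {τ : E → ℝ} {V : Set (E × ℝ)}
  {G : E × ℝ → F}

def underGraph (τ : E → ℝ) : Set (E × ℝ) := {p | 0 ≤ p.2 ∧ p.2 ≤ τ p.1}

lemma hasFDerivAt_indicator_underGraph (hO : IsOpen O) (hτ : DifferentiableOn ℝ τ O)
    (hV : IsOpen V) (hS : ∀ p ∈ underGraph τ, p.1 ∈ O → p ∈ V) (hG : DifferentiableOn ℝ G V)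
    (h0 : FlatAlong G 0 O) (hτG : FlatAlong G τ O) {p : E × ℝ} (hp : p.1 ∈ O) :
    HasFDerivAt ((underGraph τ).indicator G) ((underGraph τ).indicator (fderiv ℝ G) p) p := by
  have hτp : ContinuousAt (fun q : E × ℝ => τ q.1) p :=
    (hτ.continuousOn.continuousAt (hO.mem_nhds hp)).comp continuousAt_fst
  by_cases hpS : p ∈ underGraph τ
  · rw [indicator_of_mem hpS]
    have hGd := hG.differentiableAt (hV.mem_nhds (hS p hpS hp))
    by_cases hint : 0 < p.2 ∧ p.2 < τ p.1
    · refine hGd.hasFDerivAt.congr_of_eventuallyEq ?_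
      filter_upwards [continuousAt_const.eventually_lt continuousAt_snd hint.1,
        continuousAt_snd.eventually_lt hτp hint.2] with q hq0 hqτ
      exact indicator_of_mem (show q ∈ underGraph τ from ⟨hq0.le, hqτ.le⟩) G
    obtain ⟨c, hc, hflat, hpc⟩ :
        ∃ c : E → ℝ, DifferentiableOn ℝ c O ∧ FlatAlong G c O ∧ p.2 = c p.1 := by
      rcases hpS.1.eq_or_lt with h | h
      · exact ⟨0, differentiableOn_const 0, h0, h.symm⟩
      · exact ⟨τ, hτ, hτG, hpS.2.eq_or_lt.resolve_right fun h' => hint ⟨h, h'⟩⟩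
    obtain ⟨x, t⟩ := p
    obtain rfl : t = c x := hpc
    have hdG := hflat.fderiv_eq_zero hO hc hp hGd
    rw [hdG]
    exact HasFDerivAt.indicator_of_eq_zero _ (hdG ▸ hGd.hasFDerivAt) (by simpa using hflat x hp 0)
  · rw [indicator_of_notMem hpS]
    refine (hasFDerivAt_const 0 p).congr_of_eventuallyEq ?_
    have hout : ∀ᶠ q in 𝓝 p, q ∉ underGraph τ := by
      rcases not_and_or.1 hpS with hp0 | hpτ
      · filter_upwards [continuousAt_snd.eventually_lt continuousAt_const (not_le.1 hp0)]
          with q hq hqS using hqS.1.not_gt hq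
      · filter_upwards [hτp.eventually_lt continuousAt_snd (not_le.1 hpτ)]
          with q hq hqS using hqS.2.not_gt hq
    filter_upwards [hout] with q hq using indicator_of_notMem hq G

end Cutoff

universe u v

/- The induction step passes from `F` to `E × ℝ →L[ℝ] F`, which stays in `Type (max u v)`;
`contDiffOn_indicator_underGraph` lifts this universe restriction through `ULift`. -/
theorem contDiffOn_indicator_underGraph_nat {E : Type u} [NormedAddCommGroup E]
    [NormedSpace ℝ E] {O : Set E} {τ : E → ℝ} {V : Set (E × ℝ)} (hO : IsOpen O)
    (hτ : ContDiffOn ℝ ∞ τ O) (hτ0 : ∀ y ∈ O, 0 ≤ τ y) (hV : IsOpen V)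
    (hS : ∀ p ∈ underGraph τ, p.1 ∈ O → p ∈ V) (n : ℕ) {F : Type max u v}
    [NormedAddCommGroup F] [NormedSpace ℝ F] {G : E × ℝ → F} (hG : ContDiffOn ℝ ∞ G V)
    (h0 : FlatAlong G 0 O) (hτG : FlatAlong G τ O) :
    ContDiffOn ℝ n ((underGraph τ).indicator G) (O ×ˢ univ) := by
  have hτd : DifferentiableOn ℝ τ O := hτ.differentiableOn (by simp)
  induction n generalizing F with
  | zero =>
    exact contDiffOn_zero.2 fun p hp => (hasFDerivAt_indicator_underGraph hO hτd hV hS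
      (hG.differentiableOn (by simp)) h0 hτG hp.1).continuousAt.continuousWithinAt
  | succ n ih =>
    have hderiv : ∀ p ∈ O ×ˢ univ, HasFDerivAt ((underGraph τ).indicator G)
        ((underGraph τ).indicator (fderiv ℝ G) p) p := fun p hp =>
      hasFDerivAt_indicator_underGraph hO hτd hV hS (hG.differentiableOn (by simp)) h0 hτG hp.1
    rw [Nat.cast_succ, contDiffOn_succ_iff_fderiv_of_isOpen (hO.prod isOpen_univ)]
    refine ⟨fun p hp => (hderiv p hp).differentiableAt.differentiableWithinAt, by simp,
      (ih (hG.fderiv_of_isOpen hV le_rfl) ?_ ?_).congr fun p hp => (hderiv p hp).fderiv⟩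
    · exact h0.fderiv hO (differentiableOn_const 0) hV
        (fun y hy => hS _ ⟨le_rfl, hτ0 y hy⟩ hy) hG
    · exact hτG.fderiv hO hτd hV (fun y hy => hS _ ⟨hτ0 y hy, le_rfl⟩ hy) hG

theorem contDiffOn_indicator_underGraph {E : Type u} {F : Type v} [NormedAddCommGroup E]
    [NormedSpace ℝ E] [NormedAddCommGroup F] [NormedSpace ℝ F] {O : Set E} {τ : E → ℝ}
    {V : Set (E × ℝ)} {G : E × ℝ → F} (hO : IsOpen O) (hτ : ContDiffOn ℝ ∞ τ O)
    (hτ0 : ∀ y ∈ O, 0 ≤ τ y) (hV : IsOpen V) (hS : ∀ p ∈ underGraph τ, p.1 ∈ O → p ∈ V)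
    (hG : ContDiffOn ℝ ∞ G V) (h0 : FlatAlong G 0 O) (hτG : FlatAlong G τ O) :
    ContDiffOn ℝ ∞ ((underGraph τ).indicator G) (O ×ˢ univ) := by
  let L : ULift.{u} F ≃L[ℝ] F := ContinuousLinearEquiv.ulift
  have hlift := fun n : ℕ => contDiffOn_indicator_underGraph_nat.{u, v} hO hτ hτ0 hV hS n
    (L.symm.contDiff.comp_contDiffOn hG) (h0.continuousLinearEquiv_comp L.symm)
    (hτG.continuousLinearEquiv_comp L.symm)
  refine (L.contDiff.comp_contDiffOn (contDiffOn_infty.2 hlift)).congr fun p _ => ?_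
  by_cases hp : p ∈ underGraph τ <;> simp [hp, L]

lemma contMDiffOn_chart_source_of_contDiffOn {𝕜 E H M E' : Type*} [NontriviallyNormedField 𝕜]
    [NormedAddCommGroup E] [NormedSpace 𝕜 E] [TopologicalSpace H] {I : ModelWithCorners 𝕜 E H}
    [TopologicalSpace M] [ChartedSpace H M] {n : WithTop ℕ∞} [IsManifold I n M]
    [NormedAddCommGroup E'] [NormedSpace 𝕜 E'] {f : M → E'} (x : M)
    (hf : ContDiffOn 𝕜 n (f ∘ (extChartAt I x).symm) (extChartAt I x).target) :
    ContMDiffOn I 𝓘(𝕜, E') n f (chartAt H x).source := by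
  rw [contMDiffOn_iff_source_of_mem_maximalAtlas
    (IsManifold.chart_mem_maximalAtlas (I := I) (n := n) x) subset_rfl]
  rw [← (chartAt H x).extend_source (I := I), PartialEquiv.image_source_eq_target]
  exact hf.contMDiffOn

theorem extension_by_zero_of_flat_boundary_general
    {E : Type*} [NormedAddCommGroup E] [NormedSpace ℝ E]
    {H : Type*} [TopologicalSpace H] (I : ModelWithCorners ℝ E H) [I.Boundaryless]
    {U : Type*} [TopologicalSpace U] [ChartedSpace H U] [IsManifold I (⊤ : ℕ∞) U]
    (T : U → ℝ) (hT : ContMDiff I 𝓘(ℝ, ℝ) (⊤ : ℕ∞) T) (hT0 : ∀ u, 0 ≤ T u)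
    (V : Set (U × ℝ)) (hV : IsOpen V)
    (hUV : {p : U × ℝ | 0 ≤ p.2 ∧ p.2 ≤ T p.1} ⊆ V)
    (F : U × ℝ → ℝ)
    (hF : ContMDiffOn (I.prod 𝓘(ℝ, ℝ)) 𝓘(ℝ, ℝ) (⊤ : ℕ∞) F V)
    (hder : ∀ (u : U) (m : ℕ),
      iteratedDeriv m (fun t => F (u, t)) 0 = 0 ∧
      iteratedDeriv m (fun t => F (u, t)) (T u) = 0) :
    ContMDiff (I.prod 𝓘(ℝ, ℝ)) 𝓘(ℝ, ℝ) (⊤ : ℕ∞)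
      (fun p : U × ℝ => if 0 ≤ p.2 ∧ p.2 ≤ T p.1 then F p else 0) := by
  refine contMDiff_of_locally_contMDiffOn fun q => ⟨_, (chartAt _ q).open_source,
    mem_chart_source _ q, contMDiffOn_chart_source_of_contDiffOn q ?_⟩
  set e := extChartAt I q.1
  have hτ : ContDiffOn ℝ ∞ (T ∘ e.symm) e.target :=
    (hT.comp_contMDiffOn (contMDiffOn_extChartAt_symm q.1)).contDiffOn
  have hφ : ContMDiffOn 𝓘(ℝ, E × ℝ) (I.prod 𝓘(ℝ, ℝ)) ∞ (fun p => (e.symm p.1, p.2))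
      (e.target ×ˢ univ) :=
    ((contMDiffOn_extChartAt_symm q.1).comp contDiff_fst.contMDiff.contMDiffOn
      fun _ hp => hp.1).prodMk contDiff_snd.contMDiff.contMDiffOn
  set V₀ := (e.target ×ˢ univ) ∩ (fun p : E × ℝ => (e.symm p.1, p.2)) ⁻¹' V
  have hV₀ : IsOpen V₀ :=
    hφ.continuousOn.isOpen_inter_preimage ((isOpen_extChartAt_target q.1).prod isOpen_univ) hV
  have hG₀ : ContDiffOn ℝ ∞ (fun p : E × ℝ => F (e.symm p.1, p.2)) V₀ :=
    (hF.comp (hφ.mono inter_subset_left) fun p hp => hp.2).contDiffOn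
  have hcut := contDiffOn_indicator_underGraph (isOpen_extChartAt_target q.1) hτ (fun y _ => hT0 _)
    hV₀ (fun p hp hp1 => ⟨⟨hp1, trivial⟩, hUV hp⟩) hG₀
    (fun y _ k => (hder (e.symm y) k).1) (fun y _ k => (hder (e.symm y) k).2)
  simp only [extChartAt_prod, extChartAt_model_space_eq_id, PartialEquiv.prod_target,
    PartialEquiv.prod_symm, PartialEquiv.refl_target, PartialEquiv.refl_symm]
  refine hcut.congr fun p _ => ?_
  simp [underGraph, indicator_apply, e]

/-- Let `U` be a finite-dimensional smooth manifold without boundary,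
`T : U → ℝ` a nonnegative `C^∞` function, and `Ũ = {(u,t) | 0 ≤ t ≤ T u} ⊆ U × ℝ`.
If `F` is `C^∞` on an open neighbourhood `V` of `Ũ` and, for every `u` and every `m ≥ 0`,
the `m`-th derivative of `t ↦ F (u, t)` vanishes at `t = 0` and at `t = T u`, then the
function equal to `F` on `Ũ` and `0` outside is `C^∞` on `U × ℝ`. -/
theorem extension_by_zero_of_flat_boundary
    {E : Type*} [NormedAddCommGroup E] [NormedSpace ℝ E] [FiniteDimensional ℝ E]
    {H : Type*} [TopologicalSpace H] (I : ModelWithCorners ℝ E H) [I.Boundaryless]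
    {U : Type*} [TopologicalSpace U] [ChartedSpace H U] [IsManifold I (⊤ : ℕ∞) U]
    (T : U → ℝ) (hT : ContMDiff I 𝓘(ℝ, ℝ) (⊤ : ℕ∞) T) (hT0 : ∀ u, 0 ≤ T u)
    (V : Set (U × ℝ)) (hV : IsOpen V)
    (hUV : {p : U × ℝ | 0 ≤ p.2 ∧ p.2 ≤ T p.1} ⊆ V)
    (F : U × ℝ → ℝ)
    (hF : ContMDiffOn (I.prod 𝓘(ℝ, ℝ)) 𝓘(ℝ, ℝ) (⊤ : ℕ∞) F V)
    (hder : ∀ (u : U) (m : ℕ),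
      iteratedDeriv m (fun t => F (u, t)) 0 = 0 ∧
      iteratedDeriv m (fun t => F (u, t)) (T u) = 0) :
    ContMDiff (I.prod 𝓘(ℝ, ℝ)) 𝓘(ℝ, ℝ) (⊤ : ℕ∞)
      (fun p : U × ℝ => if 0 ≤ p.2 ∧ p.2 ≤ T p.1 then F p else 0) :=
  extension_by_zero_of_flat_boundary_general I T hT hT0 V hV hUV F hF hder
end

section
/- Let U be a finite-dimensional smooth manifold without boundary, N a positive integer, and T₀, T₁ : U → ℝ C∞ functions with T₀, T₁ ≥ 0. For j = 0, 1 set Ũ_j := {(u, t) ∈ U × ℝ : 0 ≤ t ≤ T_j(u)}, and let F_j : V_j → ℝ^N be a C∞ map on an open neighborhood V_j of Ũ_j in U × ℝ. Assume: (a) for every u ∈ U and every integer m ≥ 1, the m-th derivative of t ↦ F_j(u, t) vanishes at t = 0 and at t = T_j(u) (for j = 0, 1); and (b) F₀(u, T₀(u)) = F₁(u, 0) for every u ∈ U. Then there exists a C∞ map G : U × ℝ → ℝ^N such that for every u ∈ U: G(u, t) = F₀(u, t) whenever 0 ≤ t ≤ T₀(u), and G(u, t) = F₁(u, t − T₀(u))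 whenever T₀(u) ≤ t ≤ T₀(u) + T₁(u). (This is the analytic core of the lemma asserting that concatenation of smooth families of Moore paths is smooth.) -/
/-!
Write `clampTime T (u, t) = max 0 (min (T u) t)` for the projection of `t` onto `[0, T u]`. Then
`G (u, t) = F₀ (u, clampTime T₀ (u, t)) + F₁ (u, clampTime T₁ (u, t - T₀ u)) - F₁ (u, 0)`
has the required restrictions, so it suffices to show that `(u, t) ↦ A (u, clampTime T (u, t))`
is smooth whenever all `t`-derivatives of `A` of positive order vanish at `t = 0` and `t = T u`.

In a chart this is an induction on the order of smoothness. Where the clamp is not locally the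
identity, `clampTime T (x, t)` equals `0` or `T x`, a point at which `∂ₜA = 0`; since the clamp is
Lipschitz, the chain rule still applies there and gives derivative `(DA) (x, clampTime T (x, t))`.
So the derivative of the clamped extension of `A` is the clamped extension of `DA`, and `DA` is
again flat along both boundary graphs: by symmetry of second derivatives `∂ₜᵐ (DA) = D (∂ₜᵐ A)`,
and `∂ₜᵐ A` vanishes along the graph together with its `t`-derivative, hence has zero
differential there.
-/

open scoped Manifold ContDiff Topology
open Set Asymptotics

section Clamp

variable {X F : Type*}

noncomputable def clampTime (T : X → ℝ) (p : X × ℝ) : ℝ := max 0 (min (T p.1) p.2)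

noncomputable def clampExtend (T : X → ℝ) (A : X × ℝ → F) (p : X × ℝ) : F :=
  A (p.1, clampTime T p)

variable {T : X → ℝ} {p : X × ℝ}

lemma clampTime_nonneg : 0 ≤ clampTime T p := le_max_left _ _

lemma clampTime_le (h : 0 ≤ T p.1) : clampTime T p ≤ T p.1 := max_le h (min_le_left _ _)

lemma clampTime_of_nonpos (h : p.2 ≤ 0) : clampTime T p = 0 :=
  max_eq_left ((min_le_right _ _).trans h)

lemma clampTime_of_mem (h₀ : 0 ≤ p.2) (hT : p.2 ≤ T p.1) : clampTime T p = p.2 := by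
  rw [clampTime, min_eq_right hT, max_eq_right h₀]

lemma clampTime_of_le (h₀ : 0 ≤ T p.1) (hT : T p.1 ≤ p.2) : clampTime T p = T p.1 := by
  rw [clampTime, min_eq_left hT, max_eq_right h₀]

lemma clampTime_eq_zero_or_eq_or_mem (T : X → ℝ) (p : X × ℝ) :
    clampTime T p = 0 ∨ clampTime T p = T p.1 ∨ 0 < p.2 ∧ p.2 < T p.1 := by
  rcases le_or_gt p.2 0 with h₀ | h₀
  · exact Or.inl (clampTime_of_nonpos h₀)
  rcases le_or_gt (T p.1) p.2 with hT | hT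
  · rcases le_total (T p.1) 0 with hT₀ | hT₀
    · exact Or.inl (max_eq_left ((min_le_left _ _).trans hT₀))
    · exact Or.inr (Or.inl (clampTime_of_le hT₀ hT))
  · exact Or.inr (Or.inr ⟨h₀, hT⟩)

lemma abs_clampTime_sub_le (T : X → ℝ) (p q : X × ℝ) :
    |clampTime T p - clampTime T q| ≤ |T p.1 - T q.1| + |p.2 - q.2| := by
  rw [clampTime, clampTime, max_comm 0, max_comm 0]
  calc _ ≤ |min (T p.1) p.2 - min (T q.1) q.2| := abs_max_sub_max_le_abs _ _ _
    _ ≤ max |T p.1 - T q.1| |p.2 - q.2| := abs_min_sub_min_le_max _ _ _ _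
    _ ≤ _ := max_le_add_of_nonneg (abs_nonneg _) (abs_nonneg _)

end Clamp

section DerivSnd

variable {X F : Type*} [NormedAddCommGroup F] [NormedSpace ℝ F]

noncomputable def derivSnd (A : X × ℝ → F) (p : X × ℝ) : F := deriv (fun t => A (p.1, t)) p.2

def FlatAlongGraph (A : X × ℝ → F) (g : X → ℝ) (s : Set X) : Prop :=
  ∀ x ∈ s, ∀ m : ℕ, 1 ≤ m → iteratedDeriv m (fun t => A (x, t)) (g x) = 0

lemma derivSnd_iterate_apply (m : ℕ) (A : X × ℝ → F) (p : X × ℝ) :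
    derivSnd^[m] A p = iteratedDeriv m (fun t => A (p.1, t)) p.2 := by
  induction m generalizing A with
  | zero => simp
  | succ m ih => rw [Function.iterate_succ_apply, ih, iteratedDeriv_succ']; rfl

lemma derivSnd_congr [TopologicalSpace X] {A B : X × ℝ → F} {V : Set (X × ℝ)} (hV : IsOpen V)
    (h : EqOn A B V) : EqOn (derivSnd A) (derivSnd B) V := fun p hp =>
  Filter.EventuallyEq.deriv_eq <| Filter.eventually_of_mem
    ((Continuous.prodMk_right p.1).continuousAt.preimage_mem_nhds (hV.mem_nhds hp))
    fun _ ht => h ht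

lemma FlatAlongGraph.continuousLinearEquiv_comp {G : Type*} [NormedAddCommGroup G]
    [NormedSpace ℝ G] {A : X × ℝ → F} {g : X → ℝ} {s : Set X} (h : FlatAlongGraph A g s)
    (e : F ≃L[ℝ] G) : FlatAlongGraph (fun p => e (A p)) g s := fun x hx m hm => by
  change iteratedDeriv m (e ∘ fun t => A (x, t)) (g x) = 0
  rw [iteratedDeriv_eq_iteratedFDeriv, e.iteratedFDeriv_comp_left]
  simp [← iteratedDeriv_eq_iteratedFDeriv, h x hx m hm]

end DerivSnd

section Calculus

variable {E F : Type*} [NormedAddCommGroup E] [NormedSpace ℝ E]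
  [NormedAddCommGroup F] [NormedSpace ℝ F] {A : E × ℝ → F} {V : Set (E × ℝ)}

lemma ContinuousLinearMap.map_eq_of_fst_eq {L : E × ℝ →L[ℝ] F} (hL : L (0, 1) = 0)
    {v w : E × ℝ} (h : v.1 = w.1) : L v = L w := by
  have : v - w = (v.2 - w.2) • ((0 : E), (1 : ℝ)) := by
    ext <;> simp [h]
  rw [← sub_eq_zero, ← map_sub, this, map_smul, hL, smul_zero]

lemma derivSnd_eq_fderiv_apply {p : E × ℝ} (hA : DifferentiableAt ℝ A p) :
    derivSnd A p = fderiv ℝ A p (0, 1) :=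
  (hA.hasFDerivAt.comp_hasDerivAt (x := p.2)
    ((hasDerivAt_const _ p.1).prodMk (hasDerivAt_id _))).deriv

lemma FlatAlongGraph.fderiv_apply_eq_zero {g : E → ℝ} {s : Set E} (h : FlatAlongGraph A g s)
    {x : E} (hx : x ∈ s) (hA : DifferentiableAt ℝ A (x, g x)) :
    fderiv ℝ A (x, g x) (0, 1) = 0 := by
  rw [← derivSnd_eq_fderiv_apply hA, ← Function.iterate_one derivSnd, derivSnd_iterate_apply]
  exact h x hx 1 le_rfl

lemma contDiffOn_derivSnd (hV : IsOpen V) (hA : ContDiffOn ℝ ∞ A V) :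
    ContDiffOn ℝ ∞ (derivSnd A) V := by
  refine ((ContinuousLinearMap.apply ℝ F ((0 : E), (1 : ℝ))).contDiff.comp_contDiffOn
    (hA.fderiv_of_isOpen hV le_rfl)).congr fun p hp => ?_
  exact derivSnd_eq_fderiv_apply ((hA.contDiffAt (hV.mem_nhds hp)).differentiableAt (by simp))

lemma contDiffOn_derivSnd_iterate (hV : IsOpen V) (hA : ContDiffOn ℝ ∞ A V) (m : ℕ) :
    ContDiffOn ℝ ∞ (derivSnd^[m] A) V := by
  induction m with
  | zero => exact hA
  | succ m ih => rw [Function.iterate_succ_apply']; exact contDiffOn_derivSnd hV ih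

lemma derivSnd_fderiv (hV : IsOpen V) (hA : ContDiffOn ℝ ∞ A V) :
    EqOn (derivSnd (fderiv ℝ A)) (fderiv ℝ (derivSnd A)) V := by
  intro p hp
  have hAp : ContDiffAt ℝ ∞ A p := hA.contDiffAt (hV.mem_nhds hp)
  have hA' : DifferentiableAt ℝ (fderiv ℝ A) p :=
    ((hA.fderiv_of_isOpen (m := ∞) hV le_rfl).contDiffAt (hV.mem_nhds hp)).differentiableAt
      (by simp)
  have hloc : derivSnd A =ᶠ[𝓝 p] ContinuousLinearMap.apply ℝ F ((0 : E), (1 : ℝ)) ∘ fderiv ℝ A :=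
    Filter.eventually_of_mem (hV.mem_nhds hp) fun q hq =>
      derivSnd_eq_fderiv_apply ((hA.contDiffAt (hV.mem_nhds hq)).differentiableAt (by simp))
  rw [derivSnd_eq_fderiv_apply hA', hloc.fderiv_eq,
    ((ContinuousLinearMap.apply ℝ F _).hasFDerivAt.comp p hA'.hasFDerivAt).fderiv]
  refine ContinuousLinearMap.ext fun v => ?_
  exact hAp.isSymmSndFDerivAt (by simpa using WithTop.coe_le_coe.mpr (le_top : (2 : ℕ∞) ≤ ⊤))
    (0, 1) v

lemma derivSnd_iterate_fderiv (hV : IsOpen V) (hA : ContDiffOn ℝ ∞ A V) (m : ℕ) :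
    EqOn (derivSnd^[m] (fderiv ℝ A)) (fderiv ℝ (derivSnd^[m] A)) V := by
  induction m with
  | zero => exact fun _ _ => rfl
  | succ m ih =>
    intro p hp
    rw [Function.iterate_succ_apply', Function.iterate_succ_apply', derivSnd_congr hV ih hp]
    exact derivSnd_fderiv hV (contDiffOn_derivSnd_iterate hV hA m) hp

lemma fderiv_eq_zero_of_eventually_graph_eq_zero {g : E → ℝ} {x : E}
    (hA : DifferentiableAt ℝ A (x, g x)) (hg : DifferentiableAt ℝ g x)
    (hzero : ∀ᶠ y in 𝓝 x, A (y, g y) = 0) (hL : fderiv ℝ A (x, g x) (0, 1) = 0) :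
    fderiv ℝ A (x, g x) = 0 := by
  set L := fderiv ℝ A (x, g x)
  have hgraph : HasFDerivAt (fun y => A (y, g y))
      (L.comp ((ContinuousLinearMap.id ℝ E).prod (fderiv ℝ g x))) x :=
    hA.hasFDerivAt.comp x ((hasFDerivAt_id x).prodMk hg.hasFDerivAt)
  have hcomp : L.comp ((ContinuousLinearMap.id ℝ E).prod (fderiv ℝ g x)) = 0 :=
    hgraph.unique ((hasFDerivAt_const 0 x).congr_of_eventuallyEq hzero)
  refine ContinuousLinearMap.ext fun v => ?_
  exact (L.map_eq_of_fst_eq hL (v := v) (w := (v.1, fderiv ℝ g x v.1)) rfl).trans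
    (congrArg (· v.1) hcomp)

lemma FlatAlongGraph.fderiv {g : E → ℝ} {s : Set E} (hV : IsOpen V) (hs : IsOpen s)
    (hA : ContDiffOn ℝ ∞ A V) (hg : DifferentiableOn ℝ g s) (hgV : ∀ x ∈ s, (x, g x) ∈ V)
    (hflat : FlatAlongGraph A g s) : FlatAlongGraph (fderiv ℝ A) g s := by
  intro x hx m hm
  have hdiff : ∀ n, DifferentiableAt ℝ (derivSnd^[n] A) (x, g x) := fun n =>
    ((contDiffOn_derivSnd_iterate hV hA n).contDiffAt (hV.mem_nhds (hgV x hx))).differentiableAt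
      (by simp)
  have hzero : ∀ n, 1 ≤ n → ∀ y ∈ s, derivSnd^[n] A (y, g y) = 0 := fun n hn y hy => by
    rw [derivSnd_iterate_apply]; exact hflat y hy n hn
  rw [← derivSnd_iterate_apply (p := (x, g x)), derivSnd_iterate_fderiv hV hA m (hgV x hx)]
  refine fderiv_eq_zero_of_eventually_graph_eq_zero (hdiff m)
    (hg.differentiableAt (hs.mem_nhds hx))
    (Filter.eventually_of_mem (hs.mem_nhds hx) (hzero m hm)) ?_
  rw [← derivSnd_eq_fderiv_apply (hdiff m), ← Function.iterate_succ_apply' derivSnd]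
  exact hzero (m + 1) (by omega) x hx

/-- Since `L` does not see the `ℝ`-direction, the inner map `q ↦ (q.1, c q)` need not be
differentiable: an `O`-bound on `c` suffices. -/
lemma HasFDerivAt.comp_prodMk_of_isBigO {L : E × ℝ →L[ℝ] F} {c : E × ℝ → ℝ} {q₀ : E × ℝ}
    (hA : HasFDerivAt A L (q₀.1, c q₀)) (hL : L (0, 1) = 0)
    (hc : (fun q => c q - c q₀) =O[𝓝 q₀] fun q => q - q₀) :
    HasFDerivAt (fun q => A (q.1, c q)) L q₀ := by
  set φ : E × ℝ → E × ℝ := fun q => (q.1, c q)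
  have hφ : (fun q => φ q - φ q₀) =O[𝓝 q₀] fun q => q - q₀ :=
    (isBigO_fst_prod' (f' := fun q : E × ℝ => q - q₀)).prod_left hc
  have hφt : Filter.Tendsto φ (𝓝 q₀) (𝓝 (φ q₀)) := by
    rw [← tendsto_sub_nhds_zero_iff]
    exact hφ.trans_tendsto (tendsto_sub_nhds_zero_iff.mpr Filter.tendsto_id)
  refine .of_isLittleO ((hA.isLittleO.comp_tendsto hφt).trans_isBigO hφ |>.congr_left fun q => ?_)
  rw [Function.comp_apply, L.map_eq_of_fst_eq hL (v := φ q - φ q₀) (w := q - q₀) rfl]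

lemma isBigO_clampTime_sub {T : E → ℝ} {q₀ : E × ℝ} (hT : DifferentiableAt ℝ T q₀.1) :
    (fun q => clampTime T q - clampTime T q₀) =O[𝓝 q₀] fun q => q - q₀ := by
  have hTq : (fun q : E × ℝ => T q.1 - T q₀.1) =O[𝓝 q₀] fun q => q - q₀ :=
    (hT.hasFDerivAt.isBigO_sub.comp_tendsto (continuous_fst.tendsto q₀)).trans
      (isBigO_fst_prod' (f' := fun q : E × ℝ => q - q₀))
  have ht : (fun q : E × ℝ => q.2 - q₀.2) =O[𝓝 q₀] fun q => q - q₀ :=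
    isBigO_snd_prod' (f' := fun q : E × ℝ => q - q₀)
  refine (isBigO_of_le _ fun q => ?_).trans (hTq.abs_left.add ht.abs_left)
  exact (abs_clampTime_sub_le T q q₀).trans (le_abs_self _)

lemma hasFDerivAt_clampExtend {T : E → ℝ} {q₀ : E × ℝ}
    (hT : DifferentiableAt ℝ T q₀.1) (hA : DifferentiableAt ℝ A (q₀.1, clampTime T q₀))
    (h₀ : fderiv ℝ A (q₀.1, 0) (0, 1) = 0) (hT₀ : fderiv ℝ A (q₀.1, T q₀.1) (0, 1) = 0) :
    HasFDerivAt (clampExtend T A) (fderiv ℝ A (q₀.1, clampTime T q₀)) q₀ := by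
  rcases clampTime_eq_zero_or_eq_or_mem T q₀ with hc | hc | ⟨h₀, hT'⟩
  · exact hA.hasFDerivAt.comp_prodMk_of_isBigO (hc ▸ h₀) (isBigO_clampTime_sub hT)
  · exact hA.hasFDerivAt.comp_prodMk_of_isBigO (hc ▸ hT₀) (isBigO_clampTime_sub hT)
  · have hloc : clampExtend T A =ᶠ[𝓝 q₀] A := by
      have hcont : ContinuousAt (fun q : E × ℝ => T q.1 - q.2) q₀ :=
        (hT.continuousAt.comp continuous_fst.continuousAt).sub continuous_snd.continuousAt
      filter_upwards [continuous_snd.continuousAt.eventually (lt_mem_nhds h₀),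
        hcont.eventually (lt_mem_nhds (sub_pos.mpr hT'))] with q hq₀ hqT
      rw [clampExtend, clampTime_of_mem hq₀.le (sub_pos.mp hqT).le]
    rw [clampTime_of_mem h₀.le hT'.le] at hA ⊢
    exact hA.hasFDerivAt.congr_of_eventuallyEq hloc

end Calculus

section Smoothness

universe u v

variable {E : Type u} [NormedAddCommGroup E] [NormedSpace ℝ E]
  {Ω : Set E} {V : Set (E × ℝ)} {T : E → ℝ}

lemma hasFDerivAt_clampExtend_of_flat {F : Type*} [NormedAddCommGroup F] [NormedSpace ℝ F]
    {A : E × ℝ → F} (hΩ : IsOpen Ω) (hV : IsOpen V) (hT : ContDiffOn ℝ ∞ T Ω)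
    (hT₀ : ∀ x ∈ Ω, 0 ≤ T x) (hslab : ∀ x ∈ Ω, ∀ t, 0 ≤ t → t ≤ T x → (x, t) ∈ V)
    (hA : ContDiffOn ℝ ∞ A V) (hflat₀ : FlatAlongGraph A (fun _ => 0) Ω)
    (hflatT : FlatAlongGraph A T Ω) {q : E × ℝ} (hq : q.1 ∈ Ω) :
    HasFDerivAt (clampExtend T A) (clampExtend T (fderiv ℝ A) q) q := by
  have hdiff : ∀ s, 0 ≤ s → s ≤ T q.1 → DifferentiableAt ℝ A (q.1, s) := fun s h₀ h₁ =>
    (hA.contDiffAt (hV.mem_nhds (hslab q.1 hq s h₀ h₁))).differentiableAt (by simp)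
  exact hasFDerivAt_clampExtend ((hT.contDiffAt (hΩ.mem_nhds hq)).differentiableAt (by simp))
    (hdiff _ clampTime_nonneg (clampTime_le (hT₀ q.1 hq)))
    (hflat₀.fderiv_apply_eq_zero hq (hdiff 0 le_rfl (hT₀ q.1 hq)))
    (hflatT.fderiv_apply_eq_zero hq (hdiff _ (hT₀ q.1 hq) le_rfl))

/-- The induction passes from `F` to `E × ℝ →L[ℝ] F`, so the universe of `F` has to contain
that of `E`. -/
lemma contDiffOn_clampExtend_of_univ_le {F : Type (max u v)} [NormedAddCommGroup F]
    [NormedSpace ℝ F] {A : E × ℝ → F} (hΩ : IsOpen Ω) (hV : IsOpen V)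
    (hT : ContDiffOn ℝ ∞ T Ω) (hT₀ : ∀ x ∈ Ω, 0 ≤ T x)
    (hslab : ∀ x ∈ Ω, ∀ t, 0 ≤ t → t ≤ T x → (x, t) ∈ V) (hA : ContDiffOn ℝ ∞ A V)
    (hflat₀ : FlatAlongGraph A (fun _ => 0) Ω) (hflatT : FlatAlongGraph A T Ω) (n : ℕ) :
    ContDiffOn ℝ n (clampExtend T A) (Ω ×ˢ univ) := by
  induction n generalizing F with
  | zero =>
    refine contDiffOn_zero.mpr fun q hq => ?_
    exact (hasFDerivAt_clampExtend_of_flat hΩ hV hT hT₀ hslab hA hflat₀ hflatT hq.1)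
      |>.continuousAt.continuousWithinAt
  | succ n ih =>
    have hderiv := fun q (hq : q ∈ Ω ×ˢ univ) =>
      hasFDerivAt_clampExtend_of_flat hΩ hV hT hT₀ hslab hA hflat₀ hflatT hq.1
    rw [Nat.cast_succ, contDiffOn_succ_iff_fderiv_of_isOpen (hΩ.prod isOpen_univ)]
    refine ⟨fun q hq => (hderiv q hq).differentiableAt.differentiableWithinAt, by simp,
      (ih (hA.fderiv_of_isOpen (m := ∞) hV le_rfl) ?_ ?_).congr fun q hq => (hderiv q hq).fderiv⟩
    · exact hflat₀.fderiv hV hΩ hA (differentiableOn_const 0)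
        fun x hx => hslab x hx 0 le_rfl (hT₀ x hx)
    · exact hflatT.fderiv hV hΩ hA (hT.differentiableOn (by simp))
        fun x hx => hslab x hx _ (hT₀ x hx) le_rfl

theorem contDiffOn_clampExtend {F : Type v} [NormedAddCommGroup F] [NormedSpace ℝ F]
    {A : E × ℝ → F} (hΩ : IsOpen Ω) (hV : IsOpen V)
    (hT : ContDiffOn ℝ ∞ T Ω) (hT₀ : ∀ x ∈ Ω, 0 ≤ T x)
    (hslab : ∀ x ∈ Ω, ∀ t, 0 ≤ t → t ≤ T x → (x, t) ∈ V) (hA : ContDiffOn ℝ ∞ A V)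
    (hflat₀ : FlatAlongGraph A (fun _ => 0) Ω) (hflatT : FlatAlongGraph A T Ω) :
    ContDiffOn ℝ ∞ (clampExtend T A) (Ω ×ˢ univ) := by
  let e : ULift.{u} F ≃L[ℝ] F := ContinuousLinearEquiv.ulift
  have hlift : ContDiffOn ℝ ∞ (clampExtend T fun p => e.symm (A p)) (Ω ×ˢ univ) :=
    contDiffOn_infty.mpr <| contDiffOn_clampExtend_of_univ_le.{u, v} hΩ hV hT hT₀ hslab
      (e.symm.contDiff.comp_contDiffOn hA) (hflat₀.continuousLinearEquiv_comp e.symm)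
      (hflatT.continuousLinearEquiv_comp e.symm)
  exact (e.contDiff.comp_contDiffOn hlift).congr fun q _ => (e.apply_symm_apply _).symm

end Smoothness

section Manifold

variable {E H M F : Type*} [NormedAddCommGroup E] [NormedSpace ℝ E] [TopologicalSpace H]
  {I : ModelWithCorners ℝ E H} [TopologicalSpace M] [ChartedSpace H M]
  [NormedAddCommGroup F] [NormedSpace ℝ F]

lemma ContMDiffOn.contDiffOn_comp_extChartAt_symm {n : WithTop ℕ∞} [IsManifold I n M]
    {f : M → F} {s : Set M} (hf : ContMDiffOn I 𝓘(ℝ, F) n f s) (x : M) :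
    ContDiffOn ℝ n (f ∘ (extChartAt I x).symm)
      ((extChartAt I x).target ∩ (extChartAt I x).symm ⁻¹' s) := by
  have h := (contMDiffOn_iff.mp hf).2 x 0
  rwa [extChartAt_model_space_eq_id, PartialEquiv.refl_source, preimage_univ, inter_univ,
    PartialEquiv.refl_coe, Function.id_comp] at h

lemma extChartAt_prod_real_target (u : M) (t : ℝ) :
    (extChartAt (I.prod 𝓘(ℝ, ℝ)) (u, t)).target = (extChartAt I u).target ×ˢ univ := by
  rw [extChartAt_prod, PartialEquiv.prod_target, extChartAt_model_space_eq_id,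
    PartialEquiv.refl_target]

theorem contMDiff_clampExtend [I.Boundaryless] [IsManifold I ∞ M] {T : M → ℝ}
    (hT : ContMDiff I 𝓘(ℝ, ℝ) ∞ T) (hT₀ : ∀ u, 0 ≤ T u) {V : Set (M × ℝ)} (hV : IsOpen V)
    (hslab : {p : M × ℝ | 0 ≤ p.2 ∧ p.2 ≤ T p.1} ⊆ V) {A : M × ℝ → F}
    (hA : ContMDiffOn (I.prod 𝓘(ℝ, ℝ)) 𝓘(ℝ, F) ∞ A V)
    (hflat₀ : FlatAlongGraph A (fun _ => 0) univ) (hflatT : FlatAlongGraph A T univ) :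
    ContMDiff (I.prod 𝓘(ℝ, ℝ)) 𝓘(ℝ, F) ∞ (clampExtend T A) := by
  rintro ⟨u, t⟩
  set χ := extChartAt (I.prod 𝓘(ℝ, ℝ)) (u, t)
  set Ω := (extChartAt I u).target
  have hΩ : IsOpen Ω := isOpen_extChartAt_target u
  have hχ : χ.target = Ω ×ˢ univ := extChartAt_prod_real_target u t
  have hTχ : ContDiffOn ℝ ∞ (T ∘ (extChartAt I u).symm) Ω :=
    (hT.contMDiffOn (s := univ)).contDiffOn_comp_extChartAt_symm u |>.mono
      fun x hx => ⟨hx, mem_univ _⟩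
  -- `clampExtend T A ∘ χ.symm` and the clamped extension below agree by definition
  have hchart : ContDiffOn ℝ ∞ (clampExtend (T ∘ (extChartAt I u).symm) (A ∘ χ.symm))
      (Ω ×ˢ univ) :=
    contDiffOn_clampExtend (V := χ.target ∩ χ.symm ⁻¹' V) hΩ
      ((continuousOn_extChartAt_symm _).isOpen_inter_preimage (isOpen_extChartAt_target _) hV)
      hTχ (fun _ _ => hT₀ _) (fun x hx s h₀ h₁ => ⟨hχ ▸ ⟨hx, mem_univ _⟩, hslab ⟨h₀, h₁⟩⟩)
      (hA.contDiffOn_comp_extChartAt_symm _) (fun x _ => hflat₀ ((extChartAt I u).symm x) trivial)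
      (fun x _ => hflatT ((extChartAt I u).symm x) trivial)
  rw [contMDiffAt_iff_source, (I.prod 𝓘(ℝ, ℝ)).range_eq_univ, contMDiffWithinAt_univ,
    contMDiffAt_iff_contDiffAt]
  exact hchart.contDiffAt
    ((hΩ.prod isOpen_univ).mem_nhds (hχ ▸ χ.map_source (mem_extChartAt_source _)))

end Manifold

theorem smooth_concatenation_of_moore_families_general
    {E : Type*} [NormedAddCommGroup E] [NormedSpace ℝ E]
    {H : Type*} [TopologicalSpace H] (I : ModelWithCorners ℝ E H) [I.Boundaryless]
    {U : Type*} [TopologicalSpace U] [ChartedSpace H U] [IsManifold I (⊤ : ℕ∞) U]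
    (N : ℕ)
    (T₀ T₁ : U → ℝ)
    (hT₀ : ContMDiff I 𝓘(ℝ, ℝ) (⊤ : ℕ∞) T₀) (hT₁ : ContMDiff I 𝓘(ℝ, ℝ) (⊤ : ℕ∞) T₁)
    (hT₀0 : ∀ u, 0 ≤ T₀ u) (hT₁0 : ∀ u, 0 ≤ T₁ u)
    (V₀ V₁ : Set (U × ℝ)) (hV₀ : IsOpen V₀) (hV₁ : IsOpen V₁)
    (hUV₀ : {p : U × ℝ | 0 ≤ p.2 ∧ p.2 ≤ T₀ p.1} ⊆ V₀)
    (hUV₁ : {p : U × ℝ | 0 ≤ p.2 ∧ p.2 ≤ T₁ p.1} ⊆ V₁)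
    (F₀ F₁ : U × ℝ → EuclideanSpace ℝ (Fin N))
    (hF₀ : ContMDiffOn (I.prod 𝓘(ℝ, ℝ)) 𝓘(ℝ, EuclideanSpace ℝ (Fin N)) (⊤ : ℕ∞) F₀ V₀)
    (hF₁ : ContMDiffOn (I.prod 𝓘(ℝ, ℝ)) 𝓘(ℝ, EuclideanSpace ℝ (Fin N)) (⊤ : ℕ∞) F₁ V₁)
    (hder₀ : ∀ (u : U) (m : ℕ), 1 ≤ m →
      iteratedDeriv m (fun t => F₀ (u, t)) 0 = 0 ∧
      iteratedDeriv m (fun t => F₀ (u, t)) (T₀ u) = 0)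
    (hder₁ : ∀ (u : U) (m : ℕ), 1 ≤ m →
      iteratedDeriv m (fun t => F₁ (u, t)) 0 = 0 ∧
      iteratedDeriv m (fun t => F₁ (u, t)) (T₁ u) = 0)
    (hmatch : ∀ u, F₀ (u, T₀ u) = F₁ (u, 0)) :
    ∃ G : U × ℝ → EuclideanSpace ℝ (Fin N),
      ContMDiff (I.prod 𝓘(ℝ, ℝ)) 𝓘(ℝ, EuclideanSpace ℝ (Fin N)) (⊤ : ℕ∞) G ∧
      ∀ (u : U) (t : ℝ),
        (0 ≤ t → t ≤ T₀ u → G (u, t) = F₀ (u, t)) ∧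
        (T₀ u ≤ t → t ≤ T₀ u + T₁ u → G (u, t) = F₁ (u, t - T₀ u)) := by
  refine ⟨fun p => clampExtend T₀ F₀ p + clampExtend T₁ F₁ (p.1, p.2 - T₀ p.1) - F₁ (p.1, 0),
    ?_, fun u t => ⟨fun h₀ h₁ => ?_, fun h₀ h₁ => ?_⟩⟩
  · have hG₀ := contMDiff_clampExtend hT₀ hT₀0 hV₀ hUV₀ hF₀
      (fun u _ m hm => (hder₀ u m hm).1) (fun u _ m hm => (hder₀ u m hm).2)
    have hG₁ := contMDiff_clampExtend hT₁ hT₁0 hV₁ hUV₁ hF₁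
      (fun u _ m hm => (hder₁ u m hm).1) (fun u _ m hm => (hder₁ u m hm).2)
    have hshift : ContMDiff (I.prod 𝓘(ℝ, ℝ)) (I.prod 𝓘(ℝ, ℝ)) (⊤ : ℕ∞)
        fun p : U × ℝ => (p.1, p.2 - T₀ p.1) :=
      contMDiff_fst.prodMk (contMDiff_snd.sub (hT₀.comp contMDiff_fst))
    have hF₁0 : ContMDiff (I.prod 𝓘(ℝ, ℝ)) 𝓘(ℝ, EuclideanSpace ℝ (Fin N)) (⊤ : ℕ∞)
        fun p : U × ℝ => F₁ (p.1, 0) :=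
      hF₁.comp_contMDiff (contMDiff_fst.prodMk contMDiff_const) fun p => hUV₁ ⟨le_rfl, hT₁0 p.1⟩
    exact (hG₀.add (hG₁.comp hshift)).sub hF₁0
  · simp only [clampExtend, clampTime_of_mem (p := (u, t)) h₀ h₁,
      clampTime_of_nonpos (T := T₁) (p := (u, t - T₀ u)) (by simpa using h₁),
      add_sub_cancel_right]
  · simp only [clampExtend, clampTime_of_le (p := (u, t)) (hT₀0 u) h₀,
      clampTime_of_mem (T := T₁) (p := (u, t - T₀ u)) (by simpa using h₀)
        (by simpa [add_comm] using h₁), hmatch, add_sub_cancel_left]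

/-- The analytic core of the smoothness of concatenation of smooth
families of Moore paths: two smooth families `F₀, F₁ : U × ℝ → ℝ^N`, defined near
`{0 ≤ t ≤ T₀ u}` and `{0 ≤ t ≤ T₁ u}` respectively, all of whose `t`-derivatives of
order `m ≥ 1` vanish at the endpoints, and which match up (`F₀ (u, T₀ u) = F₁ (u, 0)`),
can be concatenated to a globally `C^∞` map `G : U × ℝ → ℝ^N`. -/
theorem smooth_concatenation_of_moore_families
    {E : Type*} [NormedAddCommGroup E] [NormedSpace ℝ E] [FiniteDimensional ℝ E]
    {H : Type*} [TopologicalSpace H] (I : ModelWithCorners ℝ E H) [I.Boundaryless]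
    {U : Type*} [TopologicalSpace U] [ChartedSpace H U] [IsManifold I (⊤ : ℕ∞) U]
    (N : ℕ) (hN : 0 < N)
    (T₀ T₁ : U → ℝ)
    (hT₀ : ContMDiff I 𝓘(ℝ, ℝ) (⊤ : ℕ∞) T₀) (hT₁ : ContMDiff I 𝓘(ℝ, ℝ) (⊤ : ℕ∞) T₁)
    (hT₀0 : ∀ u, 0 ≤ T₀ u) (hT₁0 : ∀ u, 0 ≤ T₁ u)
    (V₀ V₁ : Set (U × ℝ)) (hV₀ : IsOpen V₀) (hV₁ : IsOpen V₁)
    (hUV₀ : {p : U × ℝ | 0 ≤ p.2 ∧ p.2 ≤ T₀ p.1} ⊆ V₀)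
    (hUV₁ : {p : U × ℝ | 0 ≤ p.2 ∧ p.2 ≤ T₁ p.1} ⊆ V₁)
    (F₀ F₁ : U × ℝ → EuclideanSpace ℝ (Fin N))
    (hF₀ : ContMDiffOn (I.prod 𝓘(ℝ, ℝ)) 𝓘(ℝ, EuclideanSpace ℝ (Fin N)) (⊤ : ℕ∞) F₀ V₀)
    (hF₁ : ContMDiffOn (I.prod 𝓘(ℝ, ℝ)) 𝓘(ℝ, EuclideanSpace ℝ (Fin N)) (⊤ : ℕ∞) F₁ V₁)
    (hder₀ : ∀ (u : U) (m : ℕ), 1 ≤ m →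
      iteratedDeriv m (fun t => F₀ (u, t)) 0 = 0 ∧
      iteratedDeriv m (fun t => F₀ (u, t)) (T₀ u) = 0)
    (hder₁ : ∀ (u : U) (m : ℕ), 1 ≤ m →
      iteratedDeriv m (fun t => F₁ (u, t)) 0 = 0 ∧
      iteratedDeriv m (fun t => F₁ (u, t)) (T₁ u) = 0)
    (hmatch : ∀ u, F₀ (u, T₀ u) = F₁ (u, 0)) :
    ∃ G : U × ℝ → EuclideanSpace ℝ (Fin N),
      ContMDiff (I.prod 𝓘(ℝ, ℝ)) 𝓘(ℝ, EuclideanSpace ℝ (Fin N)) (⊤ : ℕ∞) G ∧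
      ∀ (u : U) (t : ℝ),
        (0 ≤ t → t ≤ T₀ u → G (u, t) = F₀ (u, t)) ∧
        (T₀ u ≤ t → t ≤ T₀ u + T₁ u → G (u, t) = F₁ (u, t - T₀ u)) :=
  smooth_concatenation_of_moore_families_general I N T₀ T₁ hT₀ hT₁ hT₀0 hT₁0 V₀ V₁ hV₀ hV₁ hUV₀ hUV₁
    F₀ F₁ hF₀ hF₁ hder₀ hder₁ hmatch
end

section
/- Let (Γ, c₀, c₁, …, c_r, t) be a decorated cactus. Define its dual graph T as follows: the vertex set of T is the disjoint union {c₁, …, c_r} ⊔ V_Γ; each flag f ∈ c_i (1 ≤ i ≤ r) gives an edge of T connecting the vertex c_i and the vertex λ_Γ(f) (formally, the flag set of T is (c₁ ∪ ⋯ ∪ c_r) × {0,1}, the involution swaps (f,0) and (f,1), and λ_T(f,0) = c_i for f ∈ c_i while λ_T(f,1) = λ_Γ(f)). Then T is a tree. -/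
/-!
Every edge of `Γ` has exactly one flag outside `c₀`, and tails lie in `c₀`, so the edges of the
dual graph `T` (one per flag outside `c₀`) are in bijection with those of `Γ`. As `T` has
`r + #V` vertices, genus zero `#V + (r + 1) = #E + 2` gives `#V_T = #E_T + 1`.
For connectivity, the flag `f ∉ c₀` of an edge of `Γ` lies in a cycle `cᵢ`, which also contains
`N (ι f)`; so both endpoints `λ f` and `λ (ι f) = λ (N (ι f))` are adjacent to `cᵢ` in `T`, and
connectedness of `Γ` transfers to `T`.
-/

open scoped Classical

/-- A *decorated cactus* (Definition 8.1 of the paper): a connected ribbon graph `Γ`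
of genus `0`, together with cycles `c 0, c 1, …, c r` (orbits of `rot ∘ inv` on the
set of flags) whose disjoint union is the set of flags, such that every pair
`{f, inv f}` meets `c 0` in exactly one flag, and a distinguished tail `tail`.

* `V` is the (finite) set of vertices, `F` the (finite) set of flags;
* `lam : F → V` assigns to a flag its vertex, `inv` is the involution `ι`
  (whose non-fixed orbits are the edges, and whose fixed points are the tails);
* `rot : F ≃ F` is the ribbon structure `N`, preserving `lam` and acting
  transitively on every fiber of `lam`;
* connectivity is phrased via walks of edges, and genus `0` via
  `#V + #cycles = #edges + 2` (i.e. `2 - 2g = #V - #E + #cycles` with `g = 0`). -/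
structure DecoratedCactus (r : ℕ) : Type 1 where
  V : Type
  F : Type
  [finV : Fintype V]
  [finF : Fintype F]
  [decV : DecidableEq V]
  [decF : DecidableEq F]
  lam : F → V
  inv : F → F
  inv_invol : ∀ f, inv (inv f) = f
  rot : F ≃ F
  lam_rot : ∀ f, lam (rot f) = lam f
  rot_trans : ∀ f g : F, lam f = lam g → ∃ n : ℕ, (fun x => rot x)^[n] f = g
  conn : Nonempty V ∧ ∀ v w : V,
    Relation.ReflTransGen (fun a b => ∃ f, inv f ≠ f ∧ lam f = a ∧ lam (inv f) = b) v w
  genus_zero :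
    Fintype.card V +
      (Finset.univ.image (fun f : F =>
        Finset.univ.filter (fun g : F => ∃ n : ℕ, (fun x => rot (inv x))^[n] f = g))).card =
    ((Finset.univ.filter (fun f : F => inv f ≠ f)).image (fun f => s(f, inv f))).card + 2
  c : Fin (r + 1) → Set F
  c_cycle : ∀ i, ∃ f : F, c i = {g | ∃ n : ℕ, (fun x => rot (inv x))^[n] f = g}
  c_disj : ∀ i j, i ≠ j → c i ∩ c j = ∅
  c_cover : (⋃ i, c i) = (Set.univ : Set F)
  flag_c0 : ∀ f : F, ({f, inv f} ∩ c 0 : Set F).encard = 1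
  tail : F
  tail_tail : inv tail = tail

attribute [instance] DecoratedCactus.finV DecoratedCactus.finF
  DecoratedCactus.decV DecoratedCactus.decF

namespace DecoratedCactus

variable {r : ℕ}

/-- Vertices of the dual graph: the cycles `c 1, …, c r` together with the vertices. -/
abbrev DualV (d : DecoratedCactus r) : Type := {i : Fin (r + 1) // i ≠ 0} ⊕ d.V

/-- Flags of non-zeroth cycles. -/
abbrev CFlag (d : DecoratedCactus r) : Type :=
  {f : d.F // ∃ i : Fin (r + 1), i ≠ 0 ∧ f ∈ d.c i}

/-- Flags of the dual graph: every flag `f` of `c 1 ∪ ⋯ ∪ c r` gives an edge of the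
dual graph, i.e. a pair of dual flags `(f, false)` and `(f, true)`. -/
abbrev DualF (d : DecoratedCactus r) : Type := CFlag d × Bool

/-- `λ_T`: the flag `(f, false)` is attached to the cycle `c i` containing `f`,
the flag `(f, true)` to the vertex `λ_Γ f`. -/
noncomputable def dualLam (d : DecoratedCactus r) : DualF d → DualV d := fun φ =>
  if φ.2 then Sum.inr (d.lam φ.1.1)
  else Sum.inl ⟨Classical.choose φ.1.2, (Classical.choose_spec φ.1.2).1⟩

/-- `ι_T`: swaps the two flags `(f, false)` and `(f, true)` of an edge. -/
def dualInv (d : DecoratedCactus r) : DualF d → DualF d := fun φ => (φ.1, !φ.2)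

end DecoratedCactus

theorem Set.encard_pair_inter_eq_one_iff {α : Type*} {a b : α} {S : Set α} :
    ({a, b} ∩ S).encard = 1 ↔ (a ∈ S ∨ b ∈ S) ∧ (a ∈ S → b ∈ S → a = b) := by
  by_cases hab : a = b
  · subst hab
    by_cases ha : a ∈ S <;> simp [ha]
  · by_cases ha : a ∈ S <;> by_cases hb : b ∈ S <;>
      simp [ha, hb, hab, Set.insert_inter_of_mem, Set.insert_inter_of_notMem, Set.encard_pair]

theorem Function.Involutive.card_image_sym2_eq_card_compl {α : Type*} [Fintype α]
    [DecidableEq α] {ι : α → α} (hι : Function.Involutive ι) {S : Set α}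
    (hS : ∀ f, ({f, ι f} ∩ S).encard = 1) :
    ((Finset.univ.filter fun f => ι f ≠ f).image fun f => s(f, ι f)).card =
      (Finset.univ.filter fun f => f ∉ S).card := by
  have hS' := fun f => Set.encard_pair_inter_eq_one_iff.1 (hS f)
  have himage : (Finset.univ.filter fun f => ι f ≠ f).image (fun f => s(f, ι f)) =
      (Finset.univ.filter fun f => f ∉ S).image (fun f => s(f, ι f)) := by
    ext e
    simp only [Finset.mem_image, Finset.mem_filter, Finset.mem_univ, true_and]
    constructor
    · rintro ⟨f, hf, rfl⟩
      by_cases hfS : f ∈ S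
      · refine ⟨ι f, fun hιf => hf ((hS' f).2 hfS hιf).symm, ?_⟩
        rw [hι f, Sym2.eq_swap]
      · exact ⟨f, hfS, rfl⟩
    · rintro ⟨f, hfS, rfl⟩
      refine ⟨f, fun hf => hfS ?_, rfl⟩
      simpa only [hf, or_self] using (hS' f).1
  rw [himage, Finset.card_image_of_injOn]
  intro f hf g hg hfg
  simp only [Finset.coe_filter, Finset.mem_univ, true_and, Set.mem_ofPred_eq] at hf hg
  rcases Sym2.eq_iff.1 hfg with ⟨rfl, -⟩ | ⟨rfl, -⟩
  · rfl
  · exact absurd ((hS' g).1.resolve_left hg) hf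

namespace DecoratedCactus

variable {r : ℕ}

section

variable (d : DecoratedCactus r)

def cyclePerm : Equiv.Perm d.F :=
  (Function.Involutive.toPerm d.inv d.inv_invol).trans d.rot

theorem exists_iterate_eq_iff_sameCycle {f g : d.F} :
    (∃ n : ℕ, (fun x => d.rot (d.inv x))^[n] f = g) ↔ d.cyclePerm.SameCycle f g := by
  have hiter (n : ℕ) : (fun x => d.rot (d.inv x))^[n] = ⇑(d.cyclePerm ^ n) := by
    rw [Equiv.Perm.coe_pow]; rfl
  simp only [hiter]
  exact ⟨fun ⟨n, h⟩ => ⟨n, by rwa [zpow_natCast]⟩, fun h => h.exists_nat_pow_eq⟩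

variable {d}

theorem mem_c_iff_sameCycle {i : Fin (r + 1)} {f g : d.F} (hf : f ∈ d.c i) :
    g ∈ d.c i ↔ d.cyclePerm.SameCycle f g := by
  obtain ⟨f₀, hc⟩ := d.c_cycle i
  simp only [hc, Set.mem_ofPred_eq, exists_iterate_eq_iff_sameCycle] at hf ⊢
  exact ⟨hf.symm.trans, hf.trans⟩

theorem rot_inv_mem_c {i : Fin (r + 1)} {f : d.F} (hf : f ∈ d.c i) :
    d.rot (d.inv f) ∈ d.c i :=
  (mem_c_iff_sameCycle hf).2 (Equiv.Perm.sameCycle_apply_right.2 (.refl _ _))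

variable (d)

theorem c_nonempty (i : Fin (r + 1)) : (d.c i).Nonempty := by
  obtain ⟨f, hc⟩ := d.c_cycle i
  exact ⟨f, hc ▸ ⟨0, rfl⟩⟩

theorem exists_mem_c (f : d.F) : ∃ i, f ∈ d.c i :=
  Set.mem_iUnion.1 (d.c_cover ▸ Set.mem_univ f)

variable {d}

theorem eq_of_mem_c {i j : Fin (r + 1)} {f : d.F} (hi : f ∈ d.c i) (hj : f ∈ d.c j) :
    i = j := by
  by_contra hij
  exact (d.c_disj i j hij).subset ⟨hi, hj⟩

theorem inv_notMem_c_zero {f : d.F} (hf : d.inv f ≠ f) (hf₀ : f ∈ d.c 0) :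
    d.inv f ∉ d.c 0 := fun hιf =>
  hf ((Set.encard_pair_inter_eq_one_iff.1 (d.flag_c0 f)).2 hf₀ hιf).symm

variable (d)

theorem card_cycles :
    (Finset.univ.image fun f : d.F =>
      Finset.univ.filter fun g : d.F => ∃ n : ℕ, (fun x => d.rot (d.inv x))^[n] f = g).card
      = r + 1 := by
  set cFinset := fun i : Fin (r + 1) => Finset.univ.filter (· ∈ d.c i)
  have horbit {f : d.F} {i : Fin (r + 1)} (hf : f ∈ d.c i) :
      (Finset.univ.filter fun g => ∃ n : ℕ, (fun x => d.rot (d.inv x))^[n] f = g) =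
        cFinset i := by
    ext g
    simp [cFinset, exists_iterate_eq_iff_sameCycle, mem_c_iff_sameCycle hf]
  have himage : (Finset.univ.image fun f : d.F =>
      Finset.univ.filter fun g : d.F => ∃ n : ℕ, (fun x => d.rot (d.inv x))^[n] f = g) =
        Finset.univ.image cFinset := by
    ext S
    simp only [Finset.mem_image, Finset.mem_univ, true_and]
    constructor
    · rintro ⟨f, rfl⟩
      obtain ⟨i, hi⟩ := d.exists_mem_c f
      exact ⟨i, (horbit hi).symm⟩
    · rintro ⟨i, rfl⟩
      obtain ⟨f, hf⟩ := d.c_nonempty i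
      exact ⟨f, horbit hf⟩
  have hinj : Function.Injective cFinset := by
    intro i j hij
    obtain ⟨f, hf⟩ := d.c_nonempty i
    have hfj : f ∈ cFinset j := hij ▸ by simpa [cFinset] using hf
    exact eq_of_mem_c hf (by simpa [cFinset] using hfj)
  rw [himage, Finset.card_image_of_injective _ hinj, Finset.card_univ, Fintype.card_fin]

theorem card_edges :
    ((Finset.univ.filter fun f : d.F => d.inv f ≠ f).image fun f => s(f, d.inv f)).card =
      (Finset.univ.filter fun f : d.F => f ∉ d.c 0).card :=
  Function.Involutive.card_image_sym2_eq_card_compl d.inv_invol d.flag_c0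

theorem card_dualV : Fintype.card (DualV d) = r + Fintype.card d.V := by
  rw [Fintype.card_sum, Fintype.card_subtype_compl, Fintype.card_subtype_eq, Fintype.card_fin,
    Nat.add_sub_cancel]

theorem card_cFlag :
    Fintype.card (CFlag d) = (Finset.univ.filter fun f : d.F => f ∉ d.c 0).card := by
  rw [← Fintype.card_subtype]
  refine Fintype.card_congr (Equiv.subtypeEquivRight fun f => ⟨?_, fun hf₀ => ?_⟩)
  · rintro ⟨i, hi, hf⟩ hf₀
    exact hi (eq_of_mem_c hf hf₀)
  · obtain ⟨i, hi⟩ := d.exists_mem_c f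
    exact ⟨i, fun h => hf₀ (h ▸ hi), hi⟩

theorem dualInv_ne (φ : DualF d) : dualInv d φ ≠ φ := fun h => by
  simpa [dualInv] using congrArg Prod.snd h

theorem card_dual_edges :
    ((Finset.univ.filter fun φ : DualF d => dualInv d φ ≠ φ).image
        fun φ => s(φ, dualInv d φ)).card = Fintype.card (CFlag d) := by
  rw [Function.Involutive.card_image_sym2_eq_card_compl (S := {ψ | ψ.2 = false}),
    ← Finset.card_univ]
  · refine Finset.card_nbij' Prod.fst (·, true) ?_ ?_ ?_ ?_
    all_goals rintro ⟨f, b⟩; cases b <;> simp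
  · intro φ
    simp [dualInv]
  · rintro ⟨f, b⟩
    cases b <;> simp [dualInv, Set.insert_inter_of_mem, Set.insert_inter_of_notMem]

def DualAdj (a b : DualV d) : Prop :=
  ∃ φ : DualF d, dualInv d φ ≠ φ ∧ dualLam d φ = a ∧ dualLam d (dualInv d φ) = b

instance : Std.Symm (DualAdj d) where
  symm _ _ := fun ⟨φ, _, ha, hb⟩ =>
    ⟨dualInv d φ, d.dualInv_ne _, hb, by simpa [dualInv] using ha⟩

variable {d}

theorem dualAdj_of_mem_c {i : Fin (r + 1)} (hi : i ≠ 0) {f : d.F} (hf : f ∈ d.c i) :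
    DualAdj d (.inl ⟨i, hi⟩) (.inr (d.lam f)) := by
  refine ⟨(⟨f, i, hi, hf⟩, false), d.dualInv_ne _, ?_, by simp [dualLam, dualInv]⟩
  simp only [dualLam, Bool.false_eq_true, if_false]
  exact congrArg Sum.inl (Subtype.ext
    (eq_of_mem_c (Classical.choose_spec (⟨i, hi, hf⟩ : ∃ i, i ≠ 0 ∧ f ∈ d.c i)).2 hf))

theorem exists_dualAdj_lam_and_lam_inv {f : d.F} (hf : f ∉ d.c 0) :
    ∃ x, DualAdj d x (.inr (d.lam f)) ∧ DualAdj d x (.inr (d.lam (d.inv f))) := by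
  obtain ⟨i, hi⟩ := d.exists_mem_c f
  have hi₀ : i ≠ 0 := by rintro rfl; exact hf hi
  refine ⟨_, dualAdj_of_mem_c hi₀ hi, ?_⟩
  rw [← d.lam_rot]
  exact dualAdj_of_mem_c hi₀ (rot_inv_mem_c hi)

theorem reflTransGen_dualAdj_of_inv_ne {f : d.F} (hf : d.inv f ≠ f) :
    Relation.ReflTransGen (DualAdj d) (.inr (d.lam f)) (.inr (d.lam (d.inv f))) := by
  have hpath {g : d.F} (hg : g ∉ d.c 0) :
      Relation.ReflTransGen (DualAdj d) (.inr (d.lam g)) (.inr (d.lam (d.inv g))) := by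
    obtain ⟨x, hx, hx'⟩ := exists_dualAdj_lam_and_lam_inv hg
    exact .head (Std.Symm.symm _ _ hx) (.single hx')
  by_cases hf₀ : f ∈ d.c 0
  · have h := hpath (inv_notMem_c_zero hf hf₀)
    rw [d.inv_invol] at h
    exact Std.Symm.symm _ _ h
  · exact hpath hf₀

variable (d)

theorem reflTransGen_dualAdj_inr (a b : d.V) :
    Relation.ReflTransGen (DualAdj d) (.inr a) (.inr b) := by
  refine Relation.ReflTransGen.lift' Sum.inr ?_ _ _ (d.conn.2 a b)
  rintro _ _ ⟨f, hf, rfl, rfl⟩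
  exact reflTransGen_dualAdj_of_inv_ne hf

theorem exists_reflTransGen_dualAdj_inr (x : DualV d) :
    ∃ v, Relation.ReflTransGen (DualAdj d) x (.inr v) := by
  rcases x with ⟨i, hi⟩ | v
  · obtain ⟨f, hf⟩ := d.c_nonempty i
    exact ⟨_, .single (dualAdj_of_mem_c hi hf)⟩
  · exact ⟨v, .refl⟩

theorem reflTransGen_dualAdj (x y : DualV d) : Relation.ReflTransGen (DualAdj d) x y := by
  obtain ⟨v, hv⟩ := d.exists_reflTransGen_dualAdj_inr x
  obtain ⟨w, hw⟩ := d.exists_reflTransGen_dualAdj_inr y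
  exact (hv.trans (d.reflTransGen_dualAdj_inr v w)).trans (Std.Symm.symm _ _ hw)

end

/-- Lemma 8.2.  The dual graph of a decorated cactus is a tree:
it is connected, has no tails, and `#V = #E + 1`. -/
theorem dual_graph_is_tree (d : DecoratedCactus r) :
    (Nonempty (DualV d) ∧ ∀ v w : DualV d,
      Relation.ReflTransGen
        (fun a b => ∃ φ : DualF d,
          dualInv d φ ≠ φ ∧ dualLam d φ = a ∧ dualLam d (dualInv d φ) = b) v w) ∧
    (∀ φ : DualF d, dualInv d φ ≠ φ) ∧
    Fintype.card (DualV d)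
      = ((Finset.univ.filter (fun φ : DualF d => dualInv d φ ≠ φ)).image
          (fun φ => s(φ, dualInv d φ))).card + 1 := by
  refine ⟨⟨⟨.inr d.conn.1.some⟩, d.reflTransGen_dualAdj⟩, d.dualInv_ne, ?_⟩
  have hgenus := d.genus_zero
  rw [d.card_cycles, d.card_edges] at hgenus
  rw [d.card_dual_edges, d.card_cFlag, d.card_dualV]
  omega

end DecoratedCactus
end
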